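/- arXiv:math/0703336 — 10 statements merged into one kernel-verified Lean document; each statement's English description precedes it below -/
import Mathlib

section
/- Let 𝔤 be a Lie algebra over a field of characteristic zero, let z ∈ 𝔤, let (ℓ_n)_{n∈ℤ} be a family of elements of 𝔤 and (r_{n,m})_{n,m∈ℤ} a family of scalars such that ⁅z, ℓ_n⁆ = 0 for all n ∈ ℤ and ⁅ℓ_n, ℓ_m⁆ = (n−m)·ℓ_{n+m} + r_{n,m}·z for all n, m ∈ ℤ. Define L_n := ℓ_n + (r_{n,0}/n)·z for n ≠ 0, L_0 := ℓ_0 + (r_{1,−1}/2)·z, and Z := (2·r_{2,−2} − 4·r_{1,−1})·z. Then ⁅Z, L_n⁆ = 0 for all n ∈ ℤ, and ⁅L_n, L_m⁆ = (n−m)·L_{n+m} + (1/12)·(n³−n)·δ_{n+m,0}·Z for all n, m ∈ ℤ. -/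
/-!
The relations say that `c n m := r n m • z` is a 2-cocycle of the Witt algebra with values in
the centre. Its cocycle identity with first index `0` gives `(n + m) c(n,m) = (n - m) c(n+m,0)`,
so off the antidiagonal `c` is the coboundary absorbed by `ℓ n ↦ ℓ n + (r n 0 / n) • z`. With
first index `1` it gives a second-order recurrence for `c(n,-n)`, whose solutions are the
combinations of `n` and `n ^ 3 - n`; the `n` part is absorbed by the shift of `ℓ 0`, and what
remains is the Virasoro cocycle.
-/

/-- Alternating 2-cocycles of the Witt algebra `⁅e n, e m⁆ = (n - m) • e (n + m)`. -/
structure IsWittCocycle (K : Type*) {V : Type*} [CommRing K] [AddCommGroup V] [Module K V]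
    (c : ℤ → ℤ → V) : Prop where
  skew : ∀ n m : ℤ, c m n = -c n m
  cocycle : ∀ k n m : ℤ, ((n - m : ℤ) : K) • c k (n + m) + ((m - k : ℤ) : K) • c n (m + k)
      + ((k - n : ℤ) : K) • c m (n + k) = 0

theorem isWittCocycle_of_lie {K L : Type*} [CommRing K] [LieRing L] [LieAlgebra K L]
    {z : L} {ℓ : ℤ → L} {r : ℤ → ℤ → K} (hz : ∀ n, ⁅z, ℓ n⁆ = 0)
    (hℓ : ∀ n m, ⁅ℓ n, ℓ m⁆ = ((n - m : ℤ) : K) • ℓ (n + m) + r n m • z) :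
    IsWittCocycle K fun n m => r n m • z := by
  have skew (n m : ℤ) : r m n • z = -(r n m • z) := by
    have h := lie_skew (ℓ n) (ℓ m)
    rw [hℓ, hℓ, add_comm m n] at h
    linear_combination (norm := match_scalars <;> (push_cast; ring)) -h
  refine ⟨skew, fun k n m => ?_⟩
  have hzℓ (a : ℤ) : ⁅ℓ a, z⁆ = 0 := by rw [← lie_skew, hz, neg_zero]
  have jacobi := leibniz_lie (ℓ k) (ℓ n) (ℓ m)
  simp only [hℓ, lie_add, add_lie, lie_smul, smul_lie, hz, hzℓ, smul_zero, add_zero,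
    smul_add] at jacobi
  rw [show k + n + m = k + (n + m) by ring, add_comm k m, add_comm k n,
    show n + (m + k) = k + (n + m) by ring] at jacobi
  linear_combination (norm := match_scalars <;> (push_cast; ring))
    jacobi + ((k - n : ℤ) : K) • skew (n + k) m

namespace IsWittCocycle

section CommRing

variable {K V : Type*} [CommRing K] [AddCommGroup V] [Module K V] {c : ℤ → ℤ → V}

theorem add_smul_apply (hc : IsWittCocycle K c) (n m : ℤ) :
    ((n + m : ℤ) : K) • c n m = ((n - m : ℤ) : K) • c (n + m) 0 := by
  have h := hc.cocycle 0 n m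
  rw [add_zero, add_zero] at h
  linear_combination (norm := match_scalars <;> (push_cast; ring))
    h - ((n - m : ℤ) : K) • hc.skew (n + m) 0 + (n : K) • hc.skew n m

theorem sub_one_smul_apply_succ_neg (hc : IsWittCocycle K c) (n : ℤ) :
    ((n - 1 : ℤ) : K) • c (n + 1) (-(n + 1)) =
      ((n + 2 : ℤ) : K) • c n (-n) - ((2 * n + 1 : ℤ) : K) • c 1 (-1) := by
  have h := hc.cocycle 1 n (-(n + 1))
  rw [show n + -(n + 1) = -1 by ring, show -(n + 1) + 1 = -n by ring] at h
  linear_combination (norm := match_scalars <;> (push_cast; ring))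
    h - ((1 - n : ℤ) : K) • hc.skew (n + 1) (-(n + 1))

end CommRing

variable {K V : Type*} [Field K] [CharZero K] [AddCommGroup V] [Module K V] {c : ℤ → ℤ → V}

theorem apply_neg (hc : IsWittCocycle K c) (n : ℤ) :
    c n (-n) = (((n ^ 3 - n : ℤ) : K) / 6) • (c 2 (-2) - (2 : K) • c 1 (-1))
      + (n : K) • c 1 (-1) := by
  obtain ⟨F, hF⟩ : ∃ F : ℤ → V, ∀ n, F n =
      (((n ^ 3 - n : ℤ) : K) / 6) • (c 2 (-2) - (2 : K) • c 1 (-1)) + (n : K) • c 1 (-1) :=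
    ⟨_, fun _ => rfl⟩
  rw [← hF]
  have of_two_le (n : ℤ) (hn : 2 ≤ n) : c n (-n) = F n := by
    induction n, hn using Int.leInduction with
    | base => rw [hF]; module
    | succ n hn ih =>
      have hn1 : ((n - 1 : ℤ) : K) ≠ 0 := Int.cast_ne_zero.mpr (by omega)
      apply smul_right_injective V hn1
      rw [hF] at ih ⊢
      linear_combination (norm := match_scalars <;> (push_cast; ring))
        hc.sub_one_smul_apply_succ_neg n + ((n + 2 : ℤ) : K) • ih
  have of_nonneg (n : ℤ) (hn : 0 ≤ n) : c n (-n) = F n := by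
    obtain rfl | rfl | hn := show n = 0 ∨ n = 1 ∨ 2 ≤ n by omega
    · rw [hF, neg_zero]
      linear_combination (norm := module) (2⁻¹ : K) • hc.skew 0 0
    · rw [hF]; module
    · exact of_two_le n hn
  rcases le_or_gt 0 n with hn | hn
  · exact of_nonneg n hn
  · have h := of_nonneg (-n) (by omega)
    rw [neg_neg, hF] at h
    rw [hF]
    linear_combination (norm := match_scalars <;> (push_cast; ring)) hc.skew (-n) n - h

end IsWittCocycle

/-- Any central extension of the Witt (De Witt) relations can be renormalized
into the Virasoro relations. -/
theorem virasoro_renormalization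
    {K : Type*} [Field K] [CharZero K] {g : Type*} [LieRing g] [LieAlgebra K g]
    (z : g) (ℓ : ℤ → g) (r : ℤ → ℤ → K)
    (hz : ∀ n : ℤ, ⁅z, ℓ n⁆ = 0)
    (hℓ : ∀ n m : ℤ, ⁅ℓ n, ℓ m⁆ = ((n - m : ℤ) : K) • ℓ (n + m) + r n m • z)
    (L : ℤ → g)
    (hL0 : L 0 = ℓ 0 + (r 1 (-1) / 2) • z)
    (hLn : ∀ n : ℤ, n ≠ 0 → L n = ℓ n + (r n 0 / (n : K)) • z)
    (Z : g) (hZ : Z = (2 * r 2 (-2) - 4 * r 1 (-1)) • z) :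
    (∀ n : ℤ, ⁅Z, L n⁆ = 0) ∧
      ∀ n m : ℤ, ⁅L n, L m⁆ = ((n - m : ℤ) : K) • L (n + m) +
        ((1 / 12 : K) * ((n ^ 3 - n : ℤ) : K) * (if n + m = 0 then 1 else 0)) • Z := by
  have hc := isWittCocycle_of_lie hz hℓ
  have hzℓ (n : ℤ) : ⁅ℓ n, z⁆ = 0 := by rw [← lie_skew, hz, neg_zero]
  obtain ⟨a, hLa⟩ : ∃ a : ℤ → K, ∀ n, L n = ℓ n + a n • z :=
    ⟨fun n => if n = 0 then r 1 (-1) / 2 else r n 0 / n, fun n => by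
      dsimp only
      split_ifs with h
      exacts [h ▸ hL0, hLn n h]⟩
  have hLL (n m : ℤ) : ⁅L n, L m⁆ = ⁅ℓ n, ℓ m⁆ := by
    simp only [hLa, lie_add, add_lie, lie_smul, smul_lie, hz, hzℓ, lie_self, smul_zero, add_zero]
  refine ⟨fun n => by simp [hZ, hLa, hz], fun n m => ?_⟩
  rw [hLL, hℓ]
  by_cases hnm : n + m = 0
  · obtain rfl : m = -n := by omega
    rw [if_pos hnm, hnm, hL0, hZ]
    linear_combination (norm := match_scalars <;> (push_cast; ring)) hc.apply_neg n
  · have hnm' : ((n + m : ℤ) : K) ≠ 0 := Int.cast_ne_zero.mpr hnm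
    rw [if_neg hnm, hLn _ hnm, hZ]
    apply smul_right_injective g hnm'
    linear_combination (norm := match_scalars <;> (push_cast at hnm' ⊢; field_simp; ring))
      hc.add_smul_apply n m
end

section
/- Let V be a complex inner product space, c ∈ ℝ, and (M_n)_{n∈ℤ} a family of linear endomorphisms of V such that: (i) ⟨M_n u, v⟩ = ⟨u, M_{−n} v⟩ for all u, v ∈ V and n ∈ ℤ; (ii) ⁅M_j, M_n⁆ = (j−n)·M_{j+n} for all j ∈ {−1, 0, 1} and n ∈ ℤ; (iii) ⁅M_2, M_m⁆ = (2−m)·M_{m+2} + (c/12)·(2³−2)·δ_{m,−2}·id_V for all m ∈ ℤ. Then ⁅M_n, M_m⁆ = (n−m)·M_{n+m} + (c/12)·(n³−n)·δ_{n+m,0}·id_V for all n, m ∈ ℤ. -/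
/-!
The relation for `M n` against all modes holds for `n ∈ {-1, 0, 1}` (where `n³ - n = 0`) and
for `n = 2` by hypothesis. Since `⁅M 1, M n⁆ = (1 - n) • M (n + 1)`, the Jacobi identity
propagates it from `n` to `n + 1` whenever `n ≠ 1`, hence to all `n ≥ 2`. Finally `M (-n)` is
the formal adjoint of `M n` and `c` is real, so taking adjoints in the relation for `⁅M n, M (-m)⁆`
yields the relation for `⁅M (-n), M m⁆`.
-/

open scoped InnerProductSpace

section LieAlgebra

variable {𝕜 L : Type*} [Field 𝕜]

def VirasoroRelation [AddCommGroup L] [Module 𝕜 L] [Bracket L L]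
    (c : 𝕜) (K : L) (M : ℤ → L) (n : ℤ) : Prop :=
  ∀ m : ℤ, ⁅M n, M m⁆ = ((n - m : ℤ) : 𝕜) • M (n + m) +
    (c / 12 * ((n ^ 3 - n : ℤ) : 𝕜) * (if n + m = 0 then 1 else 0)) • K

variable [LieRing L] [LieAlgebra 𝕜 L] {c : 𝕜} {K : L} {M : ℤ → L}

theorem virasoroRelation_of_cube_eq_self {j : ℤ} (hj : j ^ 3 = j)
    (h : ∀ m : ℤ, ⁅M j, M m⁆ = ((j - m : ℤ) : 𝕜) • M (j + m)) :
    VirasoroRelation c K M j := by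
  intro m
  simp [h m, hj]

theorem VirasoroRelation.add_one [CharZero 𝕜] {n : ℤ} (h : VirasoroRelation c K M n)
    (h1 : VirasoroRelation c K M 1) (hK : ∀ x : L, ⁅x, K⁆ = 0) (hn : n ≠ 1) :
    VirasoroRelation c K M (n + 1) := by
  have witt : ∀ m : ℤ, ⁅M 1, M m⁆ = ((1 - m : ℤ) : 𝕜) • M (1 + m) := fun m => by
    simpa using h1 m
  intro m
  have hn' : ((1 - n : ℤ) : 𝕜) ≠ 0 := by exact_mod_cast sub_ne_zero.mpr hn.symm
  refine smul_right_injective L hn' ?_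
  have hbr : ((1 - n : ℤ) : 𝕜) • M (n + 1) = ⁅M 1, M n⁆ := by rw [witt n, add_comm]
  dsimp only
  rw [← smul_lie, hbr, lie_lie, h m, witt m, lie_add, lie_smul, lie_smul, hK, smul_zero,
    add_zero, witt (n + m), lie_smul, h (1 + m), show (1 : ℤ) + (n + m) = n + 1 + m by ring,
    show n + (1 + m) = n + 1 + m by ring]
  by_cases hd : n + 1 + m = 0
  · obtain rfl : m = -n - 1 := by omega
    simp only [if_pos hd]
    match_scalars <;> ring
  · simp only [if_neg hd]
    match_scalars <;> ring

theorem VirasoroRelation.of_two_le [CharZero 𝕜] (h1 : VirasoroRelation c K M 1)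
    (h2 : VirasoroRelation c K M 2) (hK : ∀ x : L, ⁅x, K⁆ = 0) {n : ℤ} (hn : 2 ≤ n) :
    VirasoroRelation c K M n := by
  induction n, hn using Int.leInduction with
  | base => exact h2
  | succ k hk ih => exact ih.add_one h1 hK (by omega)

end LieAlgebra

section Hermitian

variable {𝕜 V : Type*} [RCLike 𝕜] [NormedAddCommGroup V] [InnerProductSpace 𝕜 V]

theorem inner_lie_apply_left {A A' B B' : Module.End 𝕜 V}
    (hA : ∀ u v, ⟪A u, v⟫_𝕜 = ⟪u, A' v⟫_𝕜) (hB : ∀ u v, ⟪B u, v⟫_𝕜 = ⟪u, B' v⟫_𝕜) (u v : V) :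
    ⟪⁅A, B⁆ u, v⟫_𝕜 = ⟪u, ⁅B', A'⁆ v⟫_𝕜 := by
  simp only [Ring.lie_def, LinearMap.sub_apply, Module.End.mul_apply, inner_sub_left,
    inner_sub_right, hA, hB]

theorem VirasoroRelation.neg {c : ℝ} {M : ℤ → Module.End 𝕜 V}
    (herm : ∀ (n : ℤ) (u v : V), ⟪M n u, v⟫_𝕜 = ⟪u, M (-n) v⟫_𝕜) {n : ℤ}
    (h : VirasoroRelation (c : 𝕜) 1 M n) : VirasoroRelation (c : 𝕜) 1 M (-n) := by
  intro m
  refine LinearMap.ext fun v => ext_inner_left 𝕜 fun u => ?_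
  have herm' : ∀ (k : ℤ) (u v : V), ⟪M (-k) u, v⟫_𝕜 = ⟪u, M k v⟫_𝕜 := fun k u v => by
    simpa using herm (-k) u v
  rw [← inner_lie_apply_left (herm' m) (herm n), Ring.lie_def, ← neg_sub, ← Ring.lie_def,
    h (-m), ← sub_eq_add_neg]
  simp only [LinearMap.neg_apply, LinearMap.add_apply, LinearMap.smul_apply, Module.End.one_apply,
    inner_neg_left, inner_add_left, inner_smul_left, inner_add_right, inner_smul_right, herm,
    neg_sub', sub_neg_eq_add]
  simp only [map_mul, map_div₀, RCLike.conj_ofReal, map_intCast, map_ofNat,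
    apply_ite (starRingEnd 𝕜), map_one, map_zero]
  split_ifs <;> first | omega | (push_cast; ring)

end Hermitian

/-- Fourier modes of a dimension-2 Möbius covariant hermitian field whose
second mode satisfies the Virasoro relation with the Möbius modes automatically
satisfy the full Virasoro algebra relations with central charge `c`. -/
theorem dimension_two_field_virasoro_relations
    {V : Type*} [NormedAddCommGroup V] [InnerProductSpace ℂ V]
    (c : ℝ) (M : ℤ → Module.End ℂ V)
    (herm : ∀ (n : ℤ) (u v : V), (inner ℂ ((M n) u) v : ℂ) = inner ℂ u ((M (-n)) v))
    (hmob : ∀ j ∈ ({-1, 0, 1} : Set ℤ), ∀ n : ℤ,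
      ⁅M j, M n⁆ = ((j - n : ℤ) : ℂ) • M (j + n))
    (h2 : ∀ m : ℤ, ⁅M 2, M m⁆ = ((2 - m : ℤ) : ℂ) • M (m + 2) +
      ((c : ℂ) / 12 * ((2 : ℂ) ^ 3 - 2) * (if m = -2 then 1 else 0)) •
        (1 : Module.End ℂ V)) :
    ∀ n m : ℤ, ⁅M n, M m⁆ = ((n - m : ℤ) : ℂ) • M (n + m) +
      ((c : ℂ) / 12 * ((n ^ 3 - n : ℤ) : ℂ) * (if n + m = 0 then 1 else 0)) •
        (1 : Module.End ℂ V) := by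
  let _ := LieRing.ofAssociativeRing (A := Module.End ℂ V)
  let _ := LieAlgebra.ofAssociativeAlgebra (R := ℂ) (A := Module.End ℂ V)
  have central : ∀ x : Module.End ℂ V, ⁅x, (1 : Module.End ℂ V)⁆ = 0 :=
    fun x => (Commute.one_right x).lie_eq
  have mobius : ∀ j ∈ ({-1, 0, 1} : Set ℤ), VirasoroRelation (c : ℂ) 1 M j := by
    rintro j hj
    refine virasoroRelation_of_cube_eq_self ?_ (hmob j hj)
    rcases hj with rfl | rfl | rfl <;> rfl
  have two : VirasoroRelation (c : ℂ) 1 M 2 := fun m => by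
    rw [h2 m, add_comm m]
    by_cases hm : m = -2
    · subst hm; norm_num
    · simp [hm, show 2 + m ≠ 0 by omega]
  have upper : ∀ n, 2 ≤ n → VirasoroRelation (c : ℂ) 1 M n := fun n hn =>
    VirasoroRelation.of_two_le (mobius 1 (by simp)) two central hn
  intro n
  obtain hn | hn | hn : 2 ≤ n ∨ n ∈ ({-1, 0, 1} : Set ℤ) ∨ 2 ≤ -n := by
    simp only [Set.mem_insert_iff, Set.mem_singleton_iff]; omega
  · exact upper n hn
  · exact mobius n hn
  · exact neg_neg n ▸ (upper (-n) hn).neg herm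
end

section
/- Let V be a complex inner product space, Ω ∈ V, and let (L_n)_{n∈ℤ} and (L̃_n)_{n∈ℤ} be two families of linear endomorphisms of V such that: (i) ⟨L_n u, v⟩ = ⟨u, L_{−n} v⟩ and ⟨L̃_n u, v⟩ = ⟨u, L̃_{−n} v⟩ for all u, v ∈ V and n ∈ ℤ; (ii) ⁅L_j, L_n⁆ = (j−n)·L_{j+n} and ⁅L̃_j, L̃_n⁆ = (j−n)·L̃_{j+n} for all j ∈ {−1, 0, 1} and n ∈ ℤ; (iii) L_j = L̃_j for j ∈ {−1, 0, 1}; (iv) ⁅L_2, L_{−1}⁆ = 3·L_1; (v) L_j Ω = 0 for j ∈ {−1, 0, 1}; (vi) ⟨v, L_0 v⟩ ≥ 0 for all v ∈ V. Then ⁅L_2, L̃_{−n}⁆ Ω = (2+n)·L̃_{−n+2} Ω for every integer n ≥ 3. -/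
open scoped ComplexOrder

/-!
Positivity of `L 0` kills every vector of negative `L 0`-eigenvalue, and `L k` lowers the
eigenvalue by `k`; this gives `L 2 Ω = 0` and `L 3 (L' (-2) Ω) = 0`. Hence `w = L 2 (L' (-2) Ω)`
is annihilated by `L 0` and `L 1`, and hermiticity, `‖L (-1) w‖² = ⟪w, L 1 (L (-1) w)⟫ = 0`, gives
`L (-1) w = 0`. Applying `⁅L (-1), L 2⁆ = -3 • L 1` to `L' (-n) Ω` yields the recursion
`(n - 1) • L 2 (L' (-(n + 1)) Ω) = L (-1) (L 2 (L' (-n) Ω)) + 3 (n + 1) • L' (1 - n) Ω`,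
which starts at `n = 2` from `L (-1) w = 0` and then propagates the formula by induction.
-/

namespace Module.End

variable {R M : Type*} [CommRing R] [AddCommGroup M] [Module R M]

theorem apply_apply_of_lie_eq_smul {A B C : Module.End R M} {c : R} (h : ⁅A, B⁆ = c • C)
    (v : M) : A (B v) = c • C v + B (A v) := by
  have hv := congrArg (· v) h
  simp only [Ring.lie_def, LinearMap.sub_apply, mul_apply, LinearMap.smul_apply] at hv
  exact sub_eq_iff_eq_add.mp hv

theorem apply_apply_eq_smul_of_lie_eq_smul {A B : Module.End R M} {a b : R} {v : M}
    (hv : A v = a • v) (h : ⁅A, B⁆ = b • B) : A (B v) = (b + a) • B v := by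
  rw [apply_apply_of_lie_eq_smul h, hv, map_smul, add_smul]

end Module.End

section InnerProduct

variable {V : Type*} [NormedAddCommGroup V]

theorem eq_zero_of_apply_eq_smul_of_re_neg [InnerProductSpace ℂ V] {T : Module.End ℂ V}
    (hT : ∀ v, (0 : ℂ) ≤ inner ℂ v (T v)) {c : ℂ} (hc : c.re < 0) {y : V}
    (hy : T y = c • y) : y = 0 := by
  have h := (Complex.nonneg_iff.mp (hT y)).1
  rw [hy, inner_smul_right, inner_self_eq_norm_sq_to_K] at h
  have : 0 ≤ c.re * ‖y‖ ^ 2 := by simpa [← Complex.ofReal_pow] using h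
  have : ‖y‖ ^ 2 ≤ 0 := nonpos_of_mul_nonneg_right this hc
  simpa using this

theorem apply_eq_zero_of_adjoint_apply_eq_zero {𝕜 : Type*} [RCLike 𝕜] [InnerProductSpace 𝕜 V]
    {A B : V → V} (hAB : ∀ u v, inner 𝕜 (A u) v = inner 𝕜 u (B v)) {w : V}
    (hw : B (A w) = 0) : A w = 0 := by
  rw [← inner_self_eq_zero (𝕜 := 𝕜), hAB, hw, inner_zero_right]

end InnerProduct

def IsMobiusCovariant {V : Type*} [AddCommGroup V] [Module ℂ V] (L : ℤ → Module.End ℂ V) :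
    Prop :=
  ∀ j ∈ ({-1, 0, 1} : Set ℤ), ∀ n : ℤ, ⁅L j, L n⁆ = ((j - n : ℤ) : ℂ) • L (j + n)

namespace IsMobiusCovariant

section Module

variable {V : Type*} [AddCommGroup V] [Module ℂ V] {L L' : ℤ → Module.End ℂ V} {Ω : V}

theorem lie_eq (hL : IsMobiusCovariant L) {j n k : ℤ} (hj : j ∈ ({-1, 0, 1} : Set ℤ))
    (hk : j + n = k) : ⁅L j, L n⁆ = ((j - n : ℤ) : ℂ) • L k :=
  hk ▸ hL j hj n

theorem apply_apply_vacuum (hL' : IsMobiusCovariant L')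
    (heq : ∀ j ∈ ({-1, 0, 1} : Set ℤ), L j = L' j)
    (hvac : ∀ j ∈ ({-1, 0, 1} : Set ℤ), L j Ω = 0) {j m k : ℤ} (hj : j ∈ ({-1, 0, 1} : Set ℤ))
    (hk : j + m = k) : L j (L' m Ω) = ((j - m : ℤ) : ℂ) • L' k Ω := by
  rw [heq j hj, Module.End.apply_apply_of_lie_eq_smul (hL'.lie_eq hj hk), ← heq j hj, hvac j hj,
    map_zero, add_zero]

theorem mode_two_descendant_succ (hL : IsMobiusCovariant L) (hL' : IsMobiusCovariant L')
    (heq : ∀ j ∈ ({-1, 0, 1} : Set ℤ), L j = L' j)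
    (hvac : ∀ j ∈ ({-1, 0, 1} : Set ℤ), L j Ω = 0) {n : ℤ} (hn : n ≠ 1)
    (h : L (-1) (L 2 (L' (-n) Ω)) = (((2 + n) * (n - 3) : ℤ) : ℂ) • L' (-n + 1) Ω) :
    L 2 (L' (-(n + 1)) Ω) = ((2 + (n + 1) : ℤ) : ℂ) • L' (-(n + 1) + 2) Ω := by
  have hcomm := Module.End.apply_apply_of_lie_eq_smul
    (hL.lie_eq (by simp) (by norm_num : (-1 : ℤ) + 2 = 1)) (L' (-n) Ω)
  rw [h, hL'.apply_apply_vacuum heq hvac (by simp) (by ring : (1 : ℤ) + -n = -n + 1),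
    hL'.apply_apply_vacuum heq hvac (by simp) (by ring : (-1 : ℤ) + -n = -(n + 1)),
    map_smul] at hcomm
  have hne : ((n - 1 : ℤ) : ℂ) ≠ 0 := by exact_mod_cast sub_ne_zero.mpr hn
  rw [show -(n + 1) + 2 = -n + 1 by ring]
  apply smul_right_injective V hne
  linear_combination (norm := module) -hcomm

end Module

section Hermitian

variable {V : Type*} [NormedAddCommGroup V] [InnerProductSpace ℂ V] {L L' : ℤ → Module.End ℂ V}
  {Ω : V}

theorem apply_eq_zero_of_lt (hL : IsMobiusCovariant L)
    (hpos : ∀ v : V, (0 : ℂ) ≤ inner ℂ v (L 0 v)) {v : V} {a k : ℤ}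
    (hv : L 0 v = (a : ℂ) • v) (hak : a < k) : L k v = 0 := by
  refine eq_zero_of_apply_eq_smul_of_re_neg hpos ?_
    (Module.End.apply_apply_eq_smul_of_lie_eq_smul hv (hL.lie_eq (by simp) (zero_add k)))
  simpa using hak

theorem apply_neg_one_eq_zero (hL : IsMobiusCovariant L)
    (hadj : ∀ u v : V, inner ℂ (L (-1) u) v = inner ℂ u (L 1 v)) {w : V} (h0 : L 0 w = 0)
    (h1 : L 1 w = 0) : L (-1) w = 0 := by
  refine apply_eq_zero_of_adjoint_apply_eq_zero hadj ?_
  rw [Module.End.apply_apply_of_lie_eq_smul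
    (hL.lie_eq (by simp) (by norm_num : (1 : ℤ) + -1 = 0)), h0, h1, smul_zero, map_zero, add_zero]

theorem mode_neg_one_mode_two_descendant_two (hL : IsMobiusCovariant L)
    (hL' : IsMobiusCovariant L') (heq : ∀ j ∈ ({-1, 0, 1} : Set ℤ), L j = L' j)
    (hvac : ∀ j ∈ ({-1, 0, 1} : Set ℤ), L j Ω = 0) (hpos : ∀ v : V, (0 : ℂ) ≤ inner ℂ v (L 0 v))
    (hadj : ∀ u v : V, inner ℂ (L (-1) u) v = inner ℂ u (L 1 v)) :
    L (-1) (L 2 (L' (-2) Ω)) = 0 := by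
  have hu0 : L 0 (L' (-2) Ω) = ((2 : ℤ) : ℂ) • L' (-2) Ω :=
    hL'.apply_apply_vacuum heq hvac (by simp) (zero_add _)
  have hu1 : L 1 (L' (-2) Ω) = 0 := by
    rw [hL'.apply_apply_vacuum heq hvac (by simp) (by norm_num : (1 : ℤ) + -2 = -1),
      ← heq (-1) (by simp), hvac (-1) (by simp), smul_zero]
  have hu3 : L 3 (L' (-2) Ω) = 0 := apply_eq_zero_of_lt hL hpos hu0 (by norm_num)
  refine apply_neg_one_eq_zero hL hadj ?_ ?_
  · rw [Module.End.apply_apply_eq_smul_of_lie_eq_smul hu0 (hL.lie_eq (by simp) (zero_add 2))]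
    simp
  · rw [Module.End.apply_apply_of_lie_eq_smul (hL.lie_eq (by simp) (by norm_num : (1 : ℤ) + 2 = 3)),
      hu1, hu3, smul_zero, map_zero, add_zero]

theorem mode_two_descendant (hL : IsMobiusCovariant L)
    (hL' : IsMobiusCovariant L') (heq : ∀ j ∈ ({-1, 0, 1} : Set ℤ), L j = L' j)
    (hvac : ∀ j ∈ ({-1, 0, 1} : Set ℤ), L j Ω = 0) (hpos : ∀ v : V, (0 : ℂ) ≤ inner ℂ v (L 0 v))
    (hadj : ∀ u v : V, inner ℂ (L (-1) u) v = inner ℂ u (L 1 v)) {n : ℤ} (hn : 3 ≤ n) :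
    L 2 (L' (-n) Ω) = ((2 + n : ℤ) : ℂ) • L' (-n + 2) Ω := by
  induction n, hn using Int.leInduction with
  | base =>
    refine mode_two_descendant_succ hL hL' heq hvac (n := 2) (by norm_num) ?_
    rw [mode_neg_one_mode_two_descendant_two hL hL' heq hvac hpos hadj,
      show (-2 : ℤ) + 1 = -1 by norm_num, ← heq (-1) (by simp), hvac (-1) (by simp), smul_zero]
  | succ n hn ih =>
    refine mode_two_descendant_succ hL hL' heq hvac (by omega) ?_
    rw [ih, map_smul,
      hL'.apply_apply_vacuum heq hvac (by simp) (by ring : (-1 : ℤ) + (-n + 2) = -n + 1), smul_smul]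
    congr 1
    push_cast
    ring

end Hermitian

end IsMobiusCovariant

theorem luscher_mack_commutator_on_vacuum_general
    {V : Type*} [NormedAddCommGroup V] [InnerProductSpace ℂ V]
    (Ω : V) (L L' : ℤ → Module.End ℂ V)
    (hermL : ∀ (n : ℤ) (u v : V), (inner ℂ ((L n) u) v : ℂ) = inner ℂ u ((L (-n)) v))
    (hmobL : ∀ j ∈ ({-1, 0, 1} : Set ℤ), ∀ n : ℤ,
      ⁅L j, L n⁆ = ((j - n : ℤ) : ℂ) • L (j + n))
    (hmobL' : ∀ j ∈ ({-1, 0, 1} : Set ℤ), ∀ n : ℤ,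
      ⁅L' j, L' n⁆ = ((j - n : ℤ) : ℂ) • L' (j + n))
    (heq : ∀ j ∈ ({-1, 0, 1} : Set ℤ), L j = L' j)
    (hvac : ∀ j ∈ ({-1, 0, 1} : Set ℤ), (L j) Ω = 0)
    (hpos : ∀ v : V, (0 : ℂ) ≤ inner ℂ v ((L 0) v)) :
    ∀ n : ℤ, 3 ≤ n → (⁅L 2, L' (-n)⁆) Ω = ((2 + n : ℤ) : ℂ) • (L' (-n + 2)) Ω := by
  intro n hn
  have hadj : ∀ u v : V, inner ℂ (L (-1) u) v = inner ℂ u (L 1 v) := fun u v => by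
    simpa using hermL (-1) u v
  have hL2 : L 2 Ω = 0 :=
    IsMobiusCovariant.apply_eq_zero_of_lt hmobL hpos (a := 0) (by simp [hvac 0]) two_pos
  rw [Ring.lie_def, LinearMap.sub_apply, Module.End.mul_apply, Module.End.mul_apply, hL2,
    map_zero, sub_zero]
  exact IsMobiusCovariant.mode_two_descendant hmobL hmobL' heq hvac hpos hadj hn

/-- Key algebraic step (Lüscher–Mack style) toward the uniqueness of
diffeomorphism symmetry: for two hermitian dimension-2 Möbius covariant
families `L`, `L'` with the same Möbius part annihilating the vacuum `Ω`,
one has `[L₂, L'₋ₙ] Ω = (2+n) L'₋ₙ₊₂ Ω` for all `n ≥ 3`. -/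
theorem luscher_mack_commutator_on_vacuum
    {V : Type*} [NormedAddCommGroup V] [InnerProductSpace ℂ V]
    (Ω : V) (L L' : ℤ → Module.End ℂ V)
    (hermL : ∀ (n : ℤ) (u v : V), (inner ℂ ((L n) u) v : ℂ) = inner ℂ u ((L (-n)) v))
    (hermL' : ∀ (n : ℤ) (u v : V), (inner ℂ ((L' n) u) v : ℂ) = inner ℂ u ((L' (-n)) v))
    (hmobL : ∀ j ∈ ({-1, 0, 1} : Set ℤ), ∀ n : ℤ,
      ⁅L j, L n⁆ = ((j - n : ℤ) : ℂ) • L (j + n))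
    (hmobL' : ∀ j ∈ ({-1, 0, 1} : Set ℤ), ∀ n : ℤ,
      ⁅L' j, L' n⁆ = ((j - n : ℤ) : ℂ) • L' (j + n))
    (heq : ∀ j ∈ ({-1, 0, 1} : Set ℤ), L j = L' j)
    (hcomm : ⁅L 2, L (-1)⁆ = (3 : ℂ) • L 1)
    (hvac : ∀ j ∈ ({-1, 0, 1} : Set ℤ), (L j) Ω = 0)
    (hpos : ∀ v : V, (0 : ℂ) ≤ inner ℂ v ((L 0) v)) :
    ∀ n : ℤ, 3 ≤ n → (⁅L 2, L' (-n)⁆) Ω = ((2 + n : ℤ) : ℂ) • (L' (-n + 2)) Ω :=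
  luscher_mack_commutator_on_vacuum_general Ω L L' hermL hmobL hmobL' heq hvac hpos
end

section
/- Let V be a complex inner product space and let (L_n)_{n∈ℤ} and (L̃_n)_{n∈ℤ} be families of linear endomorphisms of V such that: (i) ⟨L_n u, v⟩ = ⟨u, L_{−n} v⟩ and ⟨L̃_n u, v⟩ = ⟨u, L̃_{−n} v⟩ for all u, v ∈ V and n ∈ ℤ; (ii) ⁅L_j, L_n⁆ = (j−n)·L_{j+n} and ⁅L̃_j, L̃_n⁆ = (j−n)·L̃_{j+n} for all j ∈ {−1, 0, 1} and n ∈ ℤ; (iii) L_j = L̃_j for j ∈ {−1, 0, 1}; (iv) L_3 = L̃_3. Then L_n = L̃_n for all n ∈ ℤ. -/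
/-!
The modes `L 2, L 3, L 4, …` are determined by `L 1` and `L 3`: the bracket with `L (-1)` lowers
`L 3` to a nonzero multiple of `L 2`, and the bracket with `L 1` raises `L n` to `(1 - n) • L (n + 1)`,
where `1 - n ≠ 0` for `n ≥ 2`. Hermiticity then determines each negative mode as the adjoint of the
corresponding positive one.
-/

section Bracket

variable {K V : Type*} [Field K] [CharZero K] [AddCommGroup V] [Module K V]
  {L L' : ℤ → Module.End K V}

theorem eq_of_lie_eq_smul {j n : ℤ}
    (hL : ⁅L j, L n⁆ = ((j - n : ℤ) : K) • L (j + n))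
    (hL' : ⁅L' j, L' n⁆ = ((j - n : ℤ) : K) • L' (j + n))
    (hj : L j = L' j) (hn : L n = L' n) (hjn : j ≠ n) :
    L (j + n) = L' (j + n) :=
  smul_right_injective (Module.End K V)
    (Int.cast_ne_zero.mpr (sub_ne_zero.mpr hjn) : ((j - n : ℤ) : K) ≠ 0)
    (show ((j - n : ℤ) : K) • L (j + n) = ((j - n : ℤ) : K) • L' (j + n) by
      rw [← hL, ← hL', hj, hn])

theorem eq_of_le_of_lie_one
    (hL : ∀ n : ℤ, ⁅L 1, L n⁆ = ((1 - n : ℤ) : K) • L (1 + n))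
    (hL' : ∀ n : ℤ, ⁅L' 1, L' n⁆ = ((1 - n : ℤ) : K) • L' (1 + n))
    (h1 : L 1 = L' 1) {k : ℤ} (hk : 2 ≤ k) (hkeq : L k = L' k) :
    ∀ n, k ≤ n → L n = L' n := by
  intro n hn
  induction n, hn using Int.leInduction with
  | base => exact hkeq
  | succ n hn ih =>
    rw [add_comm]
    exact eq_of_lie_eq_smul (hL n) (hL' n) h1 ih (by omega)

end Bracket

theorem eq_of_inner_eq_inner {𝕜 V W : Type*} [RCLike 𝕜] [NormedAddCommGroup V]
    [InnerProductSpace 𝕜 V] [NormedAddCommGroup W] [InnerProductSpace 𝕜 W]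
    {A : V → W} {B B' : W → V}
    (hB : ∀ u v, inner 𝕜 (A u) v = inner 𝕜 u (B v))
    (hB' : ∀ u v, inner 𝕜 (A u) v = inner 𝕜 u (B' v)) : B = B' :=
  funext fun v => ext_inner_left 𝕜 fun u => (hB u v).symm.trans (hB' u v)

/-- Concluding step of the uniqueness theorem for diffeomorphism symmetry:
two hermitian dimension-2 Möbius covariant families with the same Möbius part
and the same cubic mode coincide. -/
theorem uniqueness_of_diffeomorphism_symmetry_modes
    {V : Type*} [NormedAddCommGroup V] [InnerProductSpace ℂ V]
    (L L' : ℤ → Module.End ℂ V)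
    (hermL : ∀ (n : ℤ) (u v : V), (inner ℂ ((L n) u) v : ℂ) = inner ℂ u ((L (-n)) v))
    (hermL' : ∀ (n : ℤ) (u v : V), (inner ℂ ((L' n) u) v : ℂ) = inner ℂ u ((L' (-n)) v))
    (hmobL : ∀ j ∈ ({-1, 0, 1} : Set ℤ), ∀ n : ℤ,
      ⁅L j, L n⁆ = ((j - n : ℤ) : ℂ) • L (j + n))
    (hmobL' : ∀ j ∈ ({-1, 0, 1} : Set ℤ), ∀ n : ℤ,
      ⁅L' j, L' n⁆ = ((j - n : ℤ) : ℂ) • L' (j + n))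
    (heq : ∀ j ∈ ({-1, 0, 1} : Set ℤ), L j = L' j)
    (heq3 : L 3 = L' 3) :
    ∀ n : ℤ, L n = L' n := by
  have h2 : L 2 = L' 2 := by
    simpa using eq_of_lie_eq_smul (hmobL (-1) (by simp) 3) (hmobL' (-1) (by simp) 3)
      (heq (-1) (by simp)) heq3 (by norm_num)
  have hnonneg : ∀ n, 0 ≤ n → L n = L' n := by
    intro n hn
    rcases lt_or_ge n 3 with h | h
    · interval_cases n
      exacts [heq 0 (by simp), heq 1 (by simp), h2]
    · exact eq_of_le_of_lie_one (hmobL 1 (by simp)) (hmobL' 1 (by simp)) (heq 1 (by simp))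
        (by norm_num) heq3 n h
  intro n
  rcases le_or_gt 0 n with h | h
  · exact hnonneg n h
  · have hadj : ⇑(L (- -n)) = L' (- -n) := eq_of_inner_eq_inner (hermL (-n))
      (by simpa only [hnonneg (-n) (by omega)] using hermL' (-n))
    simpa using LinearMap.coe_injective hadj
end

section
/- Let H be a complex inner product space, let r ≥ 0 be a real number, let m ≥ 1 be a natural number and let ε > 0. Let (v_k)_{k∈ℕ} and (w_k)_{k∈ℕ} be finitely supported families of vectors of H such that ⟨v_j, v_k⟩ = 0 and ⟨w_j, w_k⟩ = 0 whenever j ≠ k, and ‖w_k‖² ≤ r²·(k² + k·m² + m³)·‖v_k‖² for every k ∈ ℕ. Then ‖∑_{k∈ℕ} (exp(−ε·k) − exp(−ε·(k+m)))·w_k‖² ≤ 3·r²·m³·∑_{k∈ℕ} ‖v_k‖². -/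
/-!
By Pythagoras for the orthogonal `w k` it suffices to bound each coefficient: with
`c = e^{-εk} - e^{-ε(k+m)} = e^{-εk} (1 - e^{-εm})` one has `0 ≤ c ≤ 1` and
`c k ≤ (εk e^{-εk}) m ≤ m`, whence `c² (k² + k m² + m³) ≤ m² + m³ + m³ ≤ 3 m³`.
The sum on the left is finite because the energy bound forces `w k = 0` wherever `v k = 0`.
-/

open Finset Real

theorem norm_sum_sq_eq_sum_norm_sq_of_inner_eq_zero {𝕜 E ι : Type*} [RCLike 𝕜]
    [NormedAddCommGroup E] [InnerProductSpace 𝕜 E] (s : Finset ι) (u : ι → E)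
    (hu : ∀ i j, i ≠ j → (inner 𝕜 (u i) (u j) : 𝕜) = 0) :
    ‖∑ i ∈ s, u i‖ ^ 2 = ∑ i ∈ s, ‖u i‖ ^ 2 := by
  have hinner : (inner 𝕜 (∑ i ∈ s, u i) (∑ j ∈ s, u j) : 𝕜) = ∑ i ∈ s, inner 𝕜 (u i) (u i) := by
    rw [sum_inner]
    refine sum_congr rfl fun i hi => ?_
    rw [inner_sum, sum_eq_single_of_mem i hi fun j _ hji => hu i j (Ne.symm hji)]
  simp only [inner_self_eq_norm_sq_to_K] at hinner
  exact_mod_cast hinner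

theorem sq_mul_add_add_le_of_mul_le {c k m : ℝ} (hc₀ : 0 ≤ c) (hc₁ : c ≤ 1) (hk : 0 ≤ k)
    (hck : c * k ≤ m) (hm : m ^ 2 ≤ m ^ 3) :
    c ^ 2 * (k ^ 2 + k * m ^ 2 + m ^ 3) ≤ 3 * m ^ 3 := by
  have hck₀ : 0 ≤ c * k := mul_nonneg hc₀ hk
  have h₁ : (c * k) ^ 2 ≤ m ^ 3 := (pow_le_pow_left₀ hck₀ hck 2).trans hm
  have h₂ : c * (c * k) * m ^ 2 ≤ m ^ 3 := by
    calc c * (c * k) * m ^ 2 ≤ 1 * m * m ^ 2 := by gcongr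
      _ = m ^ 3 := by ring
  have h₃ : c ^ 2 * m ^ 3 ≤ m ^ 3 := by
    have : 0 ≤ m ^ 3 := by nlinarith
    nlinarith [pow_le_one₀ hc₀ hc₁ (n := 2)]
  nlinarith

theorem mul_exp_neg_le_one (x : ℝ) : x * exp (-x) ≤ 1 :=
  (mul_exp_neg_le_exp_neg_one x).trans (exp_le_one_iff.mpr (by norm_num))

theorem exp_neg_sub_exp_neg_add_nonneg {ε m : ℝ} (hε : 0 ≤ ε) (hm : 0 ≤ m) (k : ℝ) :
    0 ≤ exp (-(ε * k)) - exp (-(ε * (k + m))) := by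
  rw [sub_nonneg, exp_le_exp]; nlinarith

theorem exp_neg_sub_exp_neg_add_le_one {ε k : ℝ} (hε : 0 ≤ ε) (hk : 0 ≤ k) (m : ℝ) :
    exp (-(ε * k)) - exp (-(ε * (k + m))) ≤ 1 := by
  have : exp (-(ε * k)) ≤ 1 := exp_le_one_iff.mpr (by nlinarith)
  linarith [exp_pos (-(ε * (k + m)))]

theorem exp_neg_sub_exp_neg_add_mul_le {k m : ℝ} (hk : 0 ≤ k) (hm : 0 ≤ m) (ε : ℝ) :
    (exp (-(ε * k)) - exp (-(ε * (k + m)))) * k ≤ m := by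
  have hfactor : exp (-(ε * k)) - exp (-(ε * (k + m))) = exp (-(ε * k)) * (1 - exp (-(ε * m))) := by
    rw [mul_sub, mul_one, ← exp_add]; ring_nf
  have hlin : 1 - exp (-(ε * m)) ≤ ε * m := by linarith [add_one_le_exp (-(ε * m))]
  calc (exp (-(ε * k)) - exp (-(ε * (k + m)))) * k
      ≤ exp (-(ε * k)) * (ε * m) * k := by rw [hfactor]; gcongr
    _ = (ε * k) * exp (-(ε * k)) * m := by ring
    _ ≤ 1 * m := by gcongr; exact mul_exp_neg_le_one _
    _ = m := one_mul m

theorem exp_neg_sub_exp_neg_add_sq_mul_le {ε : ℝ} (hε : 0 ≤ ε) (k m : ℕ) :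
    (exp (-(ε * k)) - exp (-(ε * (k + m)))) ^ 2 * ((k : ℝ) ^ 2 + k * (m : ℝ) ^ 2 + (m : ℝ) ^ 3)
      ≤ 3 * (m : ℝ) ^ 3 := by
  have hm : (m : ℝ) ^ 2 ≤ (m : ℝ) ^ 3 := by
    rcases m.eq_zero_or_pos with rfl | hm
    · simp
    · exact pow_le_pow_right₀ (by exact_mod_cast hm) (by norm_num)
  exact sq_mul_add_add_le_of_mul_le (exp_neg_sub_exp_neg_add_nonneg hε m.cast_nonneg k)
    (exp_neg_sub_exp_neg_add_le_one hε k.cast_nonneg m)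
    k.cast_nonneg (exp_neg_sub_exp_neg_add_mul_le k.cast_nonneg m.cast_nonneg ε) hm

theorem commutator_with_semigroup_norm_bound_general
    {H : Type*} [NormedAddCommGroup H] [InnerProductSpace ℂ H]
    (r : ℝ) (m : ℕ) (ε : ℝ) (hε : 0 < ε)
    (v w : ℕ → H)
    (hv : (Function.support v).Finite)
    (hwo : ∀ j k : ℕ, j ≠ k → (inner ℂ (w j) (w k) : ℂ) = 0)
    (hbound : ∀ k : ℕ, ‖w k‖ ^ 2 ≤
      r ^ 2 * ((k : ℝ) ^ 2 + (k : ℝ) * (m : ℝ) ^ 2 + (m : ℝ) ^ 3) * ‖v k‖ ^ 2) :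
    ‖∑ᶠ k : ℕ, (Real.exp (-(ε * k)) - Real.exp (-(ε * (k + m)))) • w k‖ ^ 2 ≤
      3 * r ^ 2 * (m : ℝ) ^ 3 * ∑ᶠ k : ℕ, ‖v k‖ ^ 2 := by
  set c : ℕ → ℝ := fun k => exp (-(ε * k)) - exp (-(ε * (k + m)))
  have hwv : ∀ k, v k = 0 → w k = 0 := fun k hvk => by
    simpa [hvk] using hbound k
  have hsupp : Function.support (fun k => c k • w k) ⊆ hv.toFinset := fun k hk => by
    simp only [Set.Finite.coe_toFinset, Function.mem_support]
    exact fun hvk => hk (by simp [hwv k hvk])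
  have hcwo : ∀ j k, j ≠ k → (inner ℂ (c j • w j) (c k • w k) : ℂ) = 0 := fun j k hjk => by
    simp [hwo j k hjk]
  rw [finsum_eq_sum_of_support_subset _ hsupp,
    finsum_eq_sum_of_support_subset _ (s := hv.toFinset) (by simp),
    norm_sum_sq_eq_sum_norm_sq_of_inner_eq_zero _ _ hcwo, mul_sum]
  refine sum_le_sum fun k _ => ?_
  calc ‖c k • w k‖ ^ 2 = c k ^ 2 * ‖w k‖ ^ 2 := by rw [norm_smul, mul_pow, norm_eq_abs, sq_abs]
    _ ≤ c k ^ 2 * (r ^ 2 * ((k : ℝ) ^ 2 + k * (m : ℝ) ^ 2 + (m : ℝ) ^ 3) * ‖v k‖ ^ 2) := by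
      gcongr; exact hbound k
    _ = c k ^ 2 * ((k : ℝ) ^ 2 + k * (m : ℝ) ^ 2 + (m : ℝ) ^ 3) * (r ^ 2 * ‖v k‖ ^ 2) := by ring
    _ ≤ 3 * (m : ℝ) ^ 3 * (r ^ 2 * ‖v k‖ ^ 2) :=
      mul_le_mul_of_nonneg_right (exp_neg_sub_exp_neg_add_sq_mul_le hε.le k m) (by positivity)
    _ = 3 * r ^ 2 * (m : ℝ) ^ 3 * ‖v k‖ ^ 2 := by ring

/-- ε-independent norm bound `‖[L₋ₘ, e^{-εL₀}]v‖² ≤ 3 r² m³ ‖v‖²`: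
here `v k` plays the role of the component of a finite-energy vector in the
`k`-eigenspace of the conformal Hamiltonian, and `w k` that of `L₋ₘ (v k)`. -/
theorem commutator_with_semigroup_norm_bound
    {H : Type*} [NormedAddCommGroup H] [InnerProductSpace ℂ H]
    (r : ℝ) (hr : 0 ≤ r) (m : ℕ) (hm : 1 ≤ m) (ε : ℝ) (hε : 0 < ε)
    (v w : ℕ → H)
    (hv : (Function.support v).Finite) (hw : (Function.support w).Finite)
    (hvo : ∀ j k : ℕ, j ≠ k → (inner ℂ (v j) (v k) : ℂ) = 0)
    (hwo : ∀ j k : ℕ, j ≠ k → (inner ℂ (w j) (w k) : ℂ) = 0)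
    (hbound : ∀ k : ℕ, ‖w k‖ ^ 2 ≤
      r ^ 2 * ((k : ℝ) ^ 2 + (k : ℝ) * (m : ℝ) ^ 2 + (m : ℝ) ^ 3) * ‖v k‖ ^ 2) :
    ‖∑ᶠ k : ℕ, (Real.exp (-(ε * k)) - Real.exp (-(ε * (k + m)))) • w k‖ ^ 2 ≤
      3 * r ^ 2 * (m : ℝ) ^ 3 * ∑ᶠ k : ℕ, ‖v k‖ ^ 2 :=
  commutator_with_semigroup_norm_bound_general r m ε hε v w hv hwo hbound
end

section
/- Let N ≥ 1 and let θ₀ < θ₁ < ⋯ < θ_N = θ₀ + 2π be real numbers. Let f : ℝ → ℝ be 2π-periodic and differentiable at every point, and suppose there exist 2π-periodic C^∞ functions g₁, …, g_N : ℝ → ℝ such that f(θ) = g_k(θ) for all θ ∈ [θ_{k−1}, θ_k] and k = 1, …, N. Then ‖f‖_{3/2} < ∞. -/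
open intervalIntegral in
lemma ibp_aux (n : ℤ) (hn : n ≠ 0) (h h' : ℝ → ℂ)
    (hd : ∀ x, HasDerivAt h (h' x) x) (hc : Continuous h') (a b : ℝ) :
    ∫ t in a..b, h t * Complex.exp (-Complex.I * n * t)
      = (h b * Complex.exp (-Complex.I * n * b) - h a * Complex.exp (-Complex.I * n * a)
          - ∫ t in a..b, h' t * Complex.exp (-Complex.I * n * t)) / (-Complex.I * n) := by
  set c : ℂ := -Complex.I * n with hcdef
  have hc0 : c ≠ 0 := by
    simp [hcdef, Complex.I_ne_zero, Complex.ext_iff]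
    exact_mod_cast hn
  have hcont_h : Continuous h :=
    continuous_iff_continuousAt.2 fun x => (hd x).continuousAt
  have hE : ∀ t : ℝ, HasDerivAt (fun s : ℝ => Complex.exp (c * s))
      (Complex.exp (c * t) * c) t := by
    intro t
    have h1 : HasDerivAt (fun s : ℝ => (s : ℂ)) 1 t := by
      simpa using (hasDerivAt_id t).ofReal_comp
    simpa [mul_comm] using ((h1.const_mul c).cexp)
  have hF : ∀ t : ℝ, HasDerivAt (fun s => h s * Complex.exp (c * s) / c)
      (h' t * Complex.exp (c * t) / c + h t * Complex.exp (c * t)) t := by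
    intro t
    have := ((hd t).mul (hE t)).div_const c
    rw [div_add' _ _ _ hc0]
    exact this.congr_deriv (by ring)
  have hcontE : Continuous fun t : ℝ => Complex.exp (c * t) :=
    Complex.continuous_exp.comp (by continuity)
  have hint1 : IntervalIntegrable (fun t => h' t * Complex.exp (c * t) / c)
      MeasureTheory.volume a b := ((hc.mul hcontE).div_const c).intervalIntegrable a b
  have hint2 : IntervalIntegrable (fun t => h t * Complex.exp (c * t))
      MeasureTheory.volume a b := (hcont_h.mul hcontE).intervalIntegrable a b
  have key := integral_eq_sub_of_hasDerivAt (fun t _ => hF t) (hint1.add hint2)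
  rw [integral_add hint1 hint2] at key
  have hdiv : ∫ t in a..b, h' t * Complex.exp (c * t) / c
      = (∫ t in a..b, h' t * Complex.exp (c * t)) / c := integral_div c _
  rw [hdiv] at key
  have : ∫ t in a..b, h t * Complex.exp (c * t)
      = h b * Complex.exp (c * b) / c - h a * Complex.exp (c * a) / c
        - (∫ t in a..b, h' t * Complex.exp (c * t)) / c := by linear_combination key
  rw [show ∀ t : ℝ, -Complex.I * n * t = c * t from fun t => rfl] at *
  rw [this]
  ring

lemma ibp_real (n : ℤ) (hn : n ≠ 0) (g : ℝ → ℝ) (hg : ContDiff ℝ (⊤ : ℕ∞) g) (j : ℕ) (a b : ℝ) :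
    ∫ t in a..b, (Complex.ofReal (deriv^[j] g t)) * Complex.exp (-Complex.I * n * t)
      = ((Complex.ofReal (deriv^[j] g b)) * Complex.exp (-Complex.I * n * b)
          - (Complex.ofReal (deriv^[j] g a)) * Complex.exp (-Complex.I * n * a)
          - ∫ t in a..b, (Complex.ofReal (deriv^[j+1] g t)) * Complex.exp (-Complex.I * n * t))
        / (-Complex.I * n) := by
  have hg' : ContDiff ℝ (⊤ : ℕ∞) g := hg.of_le (by simp)
  have hgj : ContDiff ℝ (⊤ : ℕ∞) (deriv^[j] g) := hg'.iterate_deriv j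
  have hgj1 : ContDiff ℝ (⊤ : ℕ∞) (deriv^[j+1] g) := hg'.iterate_deriv (j+1)
  have hd : ∀ x : ℝ, HasDerivAt (fun t => (Complex.ofReal (deriv^[j] g t))) (Complex.ofReal (deriv^[j+1] g x)) x := by
    intro x
    have h1 : HasDerivAt (deriv^[j] g) (deriv^[j+1] g x) x := by
      have := (hgj.differentiable (by simp) x).hasDerivAt
      rwa [show deriv (deriv^[j] g) x = deriv^[j+1] g x from by
        rw [Function.iterate_succ_apply']] at this
    exact h1.ofReal_comp
  exact ibp_aux n hn _ _ hd (Complex.continuous_ofReal.comp hgj1.continuous) a b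

lemma deriv_eq_of_eqOn {f g : ℝ → ℝ} {a b x : ℝ} (hab : a < b) (hx : x ∈ Set.Icc a b)
    (hEq : ∀ y ∈ Set.Icc a b, f y = g y)
    (hf : DifferentiableAt ℝ f x) (hg : DifferentiableAt ℝ g x) :
    deriv f x = deriv g x := by
  have hu : UniqueDiffOn ℝ (Set.Icc a b) := uniqueDiffOn_Icc hab
  have h1 : derivWithin f (Set.Icc a b) x = deriv f x := hf.derivWithin (hu x hx)
  have h2 : derivWithin g (Set.Icc a b) x = deriv g x := hg.derivWithin (hu x hx)
  rw [← h1, ← h2]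
  exact derivWithin_congr hEq (hEq x hx)

lemma deriv_periodic_of_periodic {f : ℝ → ℝ} {T : ℝ}
    (hper : Function.Periodic f T) (hdiff : ∀ x, DifferentiableAt ℝ f x) (x : ℝ) :
    deriv f (x + T) = deriv f x := by
  have h1 : HasDerivAt (fun y => f (y + T)) (deriv f (x + T)) x := by
    simpa [Function.comp_def] using (HasDerivAt.comp x (hdiff (x + T)).hasDerivAt
      ((hasDerivAt_id x).add_const T))
  have h2 : (fun y => f (y + T)) = f := funext fun y => hper y
  rw [h2] at h1
  exact (h1.deriv).symm

/-- The `n`-th Fourier coefficient of a 2π-periodic function `f : ℝ → ℝ`. -/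
noncomputable def fourierCoefficient (f : ℝ → ℝ) (n : ℤ) : ℂ :=
  (1 / (2 * (Real.pi : ℂ))) * ∫ θ in (0 : ℝ)..(2 * Real.pi),
    (f θ : ℂ) * Complex.exp (-Complex.I * (n : ℂ) * (θ : ℂ))

/-- The `‖·‖_{3/2}` norm of a 2π-periodic function, valued in `[0, ∞]`. -/
noncomputable def norm32 (f : ℝ → ℝ) : ENNReal :=
  ∑' n : ℤ, ENNReal.ofReal
    (‖fourierCoefficient f n‖ * (1 + |(n : ℝ)| ^ ((3 : ℝ) / 2)))

/-- A once differentiable 2π-periodic function which is piecewise smooth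
(pieces given by 2π-periodic `C^∞` functions) has finite `‖·‖_{3/2}` norm. -/
theorem piecewise_smooth_finite_norm32
    (N : ℕ) (hN : 1 ≤ N) (θ : ℕ → ℝ)
    (hθ : ∀ k < N, θ k < θ (k + 1)) (hθN : θ N = θ 0 + 2 * Real.pi)
    (f : ℝ → ℝ) (hper : Function.Periodic f (2 * Real.pi))
    (hdiff : ∀ x : ℝ, DifferentiableAt ℝ f x)
    (g : ℕ → ℝ → ℝ)
    (hg : ∀ k, 1 ≤ k → k ≤ N →
      Function.Periodic (g k) (2 * Real.pi) ∧ ContDiff ℝ (⊤ : ℕ∞) (g k) ∧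
        ∀ x ∈ Set.Icc (θ (k - 1)) (θ k), f x = g k x) :
    norm32 f < ⊤ := by
  classical
  have hcf : Continuous f := continuous_iff_continuousAt.2 fun x => (hdiff x).continuousAt
  have hπ : (0 : ℝ) < 2 * Real.pi := by positivity
  have key : ∃ C : ℝ, 0 ≤ C ∧ ∀ n : ℤ, n ≠ 0 →
      ‖fourierCoefficient f n‖ * |(n : ℝ)| ^ (3 : ℕ) ≤ C := by
    have hsm : ∀ k < N, ContDiff ℝ (⊤ : ℕ∞) (g (k + 1)) := fun k hk =>
      (hg (k + 1) (by omega) (by omega)).2.1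
    have hEqOn : ∀ k < N, ∀ x ∈ Set.Icc (θ k) (θ (k + 1)), f x = g (k + 1) x := by
      intro k hk x hx
      have h := (hg (k + 1) (by omega) (by omega)).2.2 x
      simpa using h (by simpa using hx)
    set C0 : ℝ := ∑ k ∈ Finset.range N,
      (|deriv^[2] (g (k + 1)) (θ (k + 1))| + |deriv^[2] (g (k + 1)) (θ k)|
        + ∫ s in θ k..θ (k + 1), |deriv^[3] (g (k + 1)) s|) with hC0def
    have hC0nn : 0 ≤ C0 := by
      apply Finset.sum_nonneg
      intro k hk
      have h3 : (0:ℝ) ≤ ∫ s in θ k..θ (k + 1), |deriv^[3] (g (k + 1)) s| :=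
        intervalIntegral.integral_nonneg (hθ k (Finset.mem_range.1 hk)).le
          fun s _ => abs_nonneg _
      positivity
    refine ⟨C0 / (2 * Real.pi), by positivity, ?_⟩
    intro n hn
    set E : ℝ → ℂ := fun s => Complex.exp (-Complex.I * n * s) with hEdef
    set c : ℂ := -Complex.I * n with hcdef
    have hnpos : (0 : ℝ) < |(n : ℝ)| := by
      simp only [abs_pos]
      exact_mod_cast hn
    have hcabs : ‖c‖ = |(n : ℝ)| := by
      simp [hcdef]
    have hEabs : ∀ s : ℝ, ‖E s‖ = 1 := by
      intro s
      have hre : (c * (s : ℂ)).re = 0 := by simp [hcdef]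
      simp only [hEdef]
      rw [Complex.norm_exp, hre, Real.exp_zero]
    have hEper : ∀ s : ℝ, E (s + 2 * Real.pi) = E s := by
      intro s
      simp only [hEdef]
      have h1 : -Complex.I * n * ((s + 2 * Real.pi : ℝ) : ℂ)
          = -Complex.I * n * (s : ℂ) + ((-n : ℤ) : ℂ) * (2 * Real.pi * Complex.I) := by
        push_cast
        ring
      rw [h1, Complex.exp_add, Complex.exp_int_mul_two_pi_mul_I, mul_one]
    have hEcont : Continuous E := by
      apply Complex.continuous_exp.comp
      continuity
    have hT0 : fourierCoefficient f n
        = (1 / (2 * (Real.pi : ℂ))) * ∫ s in (θ 0)..(θ N), (f s : ℂ) * E s := by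
      rw [fourierCoefficient]
      congr 1
      have hφper : Function.Periodic (fun s : ℝ => (f s : ℂ) * E s) (2 * Real.pi) := by
        intro s
        simp only [hper s, hEper s]
      have h2 := hφper.intervalIntegral_add_eq 0 (θ 0)
      simp only [zero_add] at h2
      rw [← hθN] at h2
      exact h2
    have hφcont : Continuous fun s : ℝ => (f s : ℂ) * E s :=
      (Complex.continuous_ofReal.comp hcf).mul hEcont
    have hsplit : (∫ s in (θ 0)..(θ N), (f s : ℂ) * E s)
        = ∑ k ∈ Finset.range N, ∫ s in θ k..θ (k + 1), (f s : ℂ) * E s :=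
      (intervalIntegral.sum_integral_adjacent_intervals fun k _ =>
        hφcont.intervalIntegrable _ _).symm
    set D : ℕ → ℕ → ℂ := fun j k =>
      ∫ s in θ k..θ (k + 1), Complex.ofReal (deriv^[j] (g (k + 1)) s) * E s with hDdef
    have hpiece : ∀ k < N, (∫ s in θ k..θ (k + 1), (f s : ℂ) * E s) = D 0 k := by
      intro k hk
      apply intervalIntegral.integral_congr
      rw [Set.uIcc_of_le (hθ k hk).le]
      intro x hx
      simp [hEqOn k hk x hx]
    have hval : ∀ k < N, g (k + 1) (θ k) = f (θ k) ∧ g (k + 1) (θ (k + 1)) = f (θ (k + 1)) :=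
      fun k hk => ⟨(hEqOn k hk _ ⟨le_refl _, (hθ k hk).le⟩).symm,
        (hEqOn k hk _ ⟨(hθ k hk).le, le_refl _⟩).symm⟩
    have hgd : ∀ k < N, ∀ x, DifferentiableAt ℝ (g (k + 1)) x := fun k hk x =>
      ((hsm k hk).differentiable (by simp)).differentiableAt
    have hdval : ∀ k < N, deriv (g (k + 1)) (θ k) = deriv f (θ k)
        ∧ deriv (g (k + 1)) (θ (k + 1)) = deriv f (θ (k + 1)) := by
      intro k hk
      exact ⟨(deriv_eq_of_eqOn (hθ k hk) ⟨le_refl _, (hθ k hk).le⟩ (hEqOn k hk)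
          (hdiff _) (hgd k hk _)).symm,
        (deriv_eq_of_eqOn (hθ k hk) ⟨(hθ k hk).le, le_refl _⟩ (hEqOn k hk)
          (hdiff _) (hgd k hk _)).symm⟩
    have h1 : ∀ k < N, D 0 k
        = ((f (θ (k + 1)) : ℂ) * E (θ (k + 1)) - (f (θ k) : ℂ) * E (θ k) - D 1 k) / c := by
      intro k hk
      have h := ibp_real n hn (g (k + 1)) (hsm k hk) 0 (θ k) (θ (k + 1))
      simp only [Function.iterate_zero, id_eq, zero_add] at h
      rw [(hval k hk).1, (hval k hk).2] at h
      simpa only [hDdef, Function.iterate_zero, id_eq, Function.iterate_one] using h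
    have h2 : ∀ k < N, D 1 k
        = (Complex.ofReal (deriv f (θ (k + 1))) * E (θ (k + 1)) - Complex.ofReal (deriv f (θ k)) * E (θ k) - D 2 k)
          / c := by
      intro k hk
      have h := ibp_real n hn (g (k + 1)) (hsm k hk) 1 (θ k) (θ (k + 1))
      simp only [Function.iterate_one] at h
      rw [(hdval k hk).1, (hdval k hk).2] at h
      simpa only [hDdef, Function.iterate_one] using h
    have hfθ : f (θ N) = f (θ 0) := by rw [hθN]; exact hper (θ 0)
    have hEθ : E (θ N) = E (θ 0) := by rw [hθN]; exact hEper (θ 0)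
    have hdfθ : deriv f (θ N) = deriv f (θ 0) := by
      rw [hθN]; exact deriv_periodic_of_periodic hper hdiff (θ 0)
    have hsum1 : ∑ k ∈ Finset.range N, D 0 k
        = (0 - ∑ k ∈ Finset.range N, D 1 k) / c := by
      calc ∑ k ∈ Finset.range N, D 0 k
          = ∑ k ∈ Finset.range N, ((f (θ (k + 1)) : ℂ) * E (θ (k + 1))
              - (f (θ k) : ℂ) * E (θ k) - D 1 k) / c :=
            Finset.sum_congr rfl fun k hk => h1 k (Finset.mem_range.1 hk)
        _ = ((∑ k ∈ Finset.range N, ((f (θ (k + 1)) : ℂ) * E (θ (k + 1))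
              - (f (θ k) : ℂ) * E (θ k))) - ∑ k ∈ Finset.range N, D 1 k) / c := by
            rw [← Finset.sum_div, ← Finset.sum_sub_distrib]
        _ = (((f (θ N) : ℂ) * E (θ N) - (f (θ 0) : ℂ) * E (θ 0))
              - ∑ k ∈ Finset.range N, D 1 k) / c := by
            rw [Finset.sum_range_sub fun k => (f (θ k) : ℂ) * E (θ k)]
        _ = (0 - ∑ k ∈ Finset.range N, D 1 k) / c := by
            rw [hfθ, hEθ, sub_self]
    have hsum2 : ∑ k ∈ Finset.range N, D 1 k
        = (0 - ∑ k ∈ Finset.range N, D 2 k) / c := by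
      calc ∑ k ∈ Finset.range N, D 1 k
          = ∑ k ∈ Finset.range N, (Complex.ofReal (deriv f (θ (k + 1))) * E (θ (k + 1))
              - Complex.ofReal (deriv f (θ k)) * E (θ k) - D 2 k) / c :=
            Finset.sum_congr rfl fun k hk => h2 k (Finset.mem_range.1 hk)
        _ = ((∑ k ∈ Finset.range N, (Complex.ofReal (deriv f (θ (k + 1))) * E (θ (k + 1))
              - Complex.ofReal (deriv f (θ k)) * E (θ k))) - ∑ k ∈ Finset.range N, D 2 k) / c := by
            rw [← Finset.sum_div, ← Finset.sum_sub_distrib]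
        _ = ((Complex.ofReal (deriv f (θ N)) * E (θ N) - Complex.ofReal (deriv f (θ 0)) * E (θ 0))
              - ∑ k ∈ Finset.range N, D 2 k) / c := by
            rw [Finset.sum_range_sub fun k => Complex.ofReal (deriv f (θ k)) * E (θ k)]
        _ = (0 - ∑ k ∈ Finset.range N, D 2 k) / c := by
            rw [hdfθ, hEθ, sub_self]
    have hc0 : c ≠ 0 := by
      intro h
      rw [h] at hcabs
      simp at hcabs
      exact hnpos.ne' hcabs.symm
    have hTval : (∫ s in (θ 0)..(θ N), (f s : ℂ) * E s)
        = (∑ k ∈ Finset.range N, D 2 k) / c ^ 2 := by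
      rw [hsplit, Finset.sum_congr rfl fun k hk => hpiece k (Finset.mem_range.1 hk),
        hsum1, hsum2]
      field_simp
      ring
    have h3 : ∀ k < N, ‖D 2 k‖
        ≤ (|deriv^[2] (g (k + 1)) (θ (k + 1))| + |deriv^[2] (g (k + 1)) (θ k)|
            + ∫ s in θ k..θ (k + 1), |deriv^[3] (g (k + 1)) s|) / |(n : ℝ)| := by
      intro k hk
      have h := ibp_real n hn (g (k + 1)) (hsm k hk) 2 (θ k) (θ (k + 1))
      have hD2 : D 2 k = ((Complex.ofReal (deriv^[2] (g (k + 1)) (θ (k + 1))))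
            * E (θ (k + 1)) - (Complex.ofReal (deriv^[2] (g (k + 1)) (θ k))) * E (θ k)
          - ∫ s in θ k..θ (k + 1), Complex.ofReal (deriv^[3] (g (k + 1)) s) * E s) / c := by
        simpa only [hDdef] using h
      rw [hD2, norm_div, hcabs]
      gcongr
      set X := (Complex.ofReal (deriv^[2] (g (k + 1)) (θ (k + 1)))) * E (θ (k + 1)) with hX
      set Y := (Complex.ofReal (deriv^[2] (g (k + 1)) (θ k))) * E (θ k) with hY
      set Z := ∫ s in θ k..θ (k + 1), Complex.ofReal (deriv^[3] (g (k + 1)) s) * E s with hZ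
      have hXa : ‖X‖ = |deriv^[2] (g (k + 1)) (θ (k + 1))| := by
        rw [hX, norm_mul, hEabs, mul_one, Complex.norm_real, Real.norm_eq_abs]
      have hYa : ‖Y‖ = |deriv^[2] (g (k + 1)) (θ k)| := by
        rw [hY, norm_mul, hEabs, mul_one, Complex.norm_real, Real.norm_eq_abs]
      have hZa : ‖Z‖ ≤ ∫ s in θ k..θ (k + 1), |deriv^[3] (g (k + 1)) s| := by
        rw [hZ]
        refine le_trans (intervalIntegral.norm_integral_le_integral_norm (hθ k hk).le) ?_
        apply le_of_eq
        apply intervalIntegral.integral_congr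
        intro s _
        show ‖(Complex.ofReal (deriv^[3] (g (k + 1)) s)) * E s‖ = |deriv^[3] (g (k + 1)) s|
        simp [norm_mul, hEabs, Real.norm_eq_abs]
      calc ‖X - Y - Z‖ = ‖X - Y - Z‖ := rfl
        _ ≤ ‖X - Y‖ + ‖Z‖ := norm_sub_le _ _
        _ ≤ ‖X‖ + ‖Y‖ + ‖Z‖ := by
            have := norm_sub_le X Y
            linarith
        _ ≤ |deriv^[2] (g (k + 1)) (θ (k + 1))| + |deriv^[2] (g (k + 1)) (θ k)|
            + ∫ s in θ k..θ (k + 1), |deriv^[3] (g (k + 1)) s| := by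
            rw [hXa, hYa]
            have := hZa
            linarith
    have hTabs : ‖∫ s in (θ 0)..(θ N), (f s : ℂ) * E s‖
        ≤ C0 / |(n : ℝ)| ^ (3 : ℕ) := by
      rw [hTval, norm_div, norm_pow, hcabs]
      have hsumabs : ‖∑ k ∈ Finset.range N, D 2 k‖ ≤ C0 / |(n : ℝ)| := by
        calc ‖∑ k ∈ Finset.range N, D 2 k‖
            ≤ ∑ k ∈ Finset.range N, ‖D 2 k‖ := by
              refine le_trans (norm_sum_le _ _) (le_of_eq ?_)
              rfl
          _ ≤ ∑ k ∈ Finset.range N,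
              ((|deriv^[2] (g (k + 1)) (θ (k + 1))| + |deriv^[2] (g (k + 1)) (θ k)|
                + ∫ s in θ k..θ (k + 1), |deriv^[3] (g (k + 1)) s|) / |(n : ℝ)|) :=
              Finset.sum_le_sum fun k hk => h3 k (Finset.mem_range.1 hk)
          _ = C0 / |(n : ℝ)| := by rw [hC0def, Finset.sum_div]
      calc ‖∑ k ∈ Finset.range N, D 2 k‖ / |(n : ℝ)| ^ 2
          ≤ (C0 / |(n : ℝ)|) / |(n : ℝ)| ^ 2 := by gcongr
        _ = C0 / |(n : ℝ)| ^ 3 := by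
            rw [div_div]
            ring_nf
    rw [hT0, norm_mul]
    have habs2π : ‖1 / (2 * (Real.pi : ℂ))‖ = 1 / (2 * Real.pi) := by
      rw [norm_div, norm_one]
      congr 1
      rw [show (2 * (Real.pi : ℂ)) = ((2 * Real.pi : ℝ) : ℂ) by push_cast; ring,
        Complex.norm_real, Real.norm_eq_abs, abs_of_pos hπ]
    rw [habs2π]
    calc 1 / (2 * Real.pi) * ‖∫ s in (θ 0)..(θ N), (f s : ℂ) * E s‖
          * |(n : ℝ)| ^ (3 : ℕ)
        ≤ 1 / (2 * Real.pi) * (C0 / |(n : ℝ)| ^ (3 : ℕ)) * |(n : ℝ)| ^ (3 : ℕ) := by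
          gcongr
        _ = C0 / (2 * Real.pi) := by
          field_simp
  
  obtain ⟨C, hC0, hC⟩ := key
  set t : ℤ → ℝ := fun n =>
    ‖fourierCoefficient f n‖ * (1 + |(n : ℝ)| ^ ((3 : ℝ) / 2)) with ht_def
  have ht_nonneg : ∀ n, 0 ≤ t n := fun n => by
    apply mul_nonneg (norm_nonneg _)
    positivity
  have ht_bound : ∀ n : ℤ, n ≠ 0 → t n ≤ (2 * C) * |(n : ℝ)| ^ (-(3 : ℝ) / 2) := by
    intro n hn
    set x := |(n : ℝ)| with hxdef
    have hx1 : (1 : ℝ) ≤ x := by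
      have : (1 : ℤ) ≤ |n| := Int.one_le_abs hn
      calc (1:ℝ) ≤ (|n| : ℤ) := by exact_mod_cast this
        _ = x := by push_cast [hxdef]; norm_num
    have hx0 : (0 : ℝ) < x := lt_of_lt_of_le one_pos hx1
    have h32 : (1 : ℝ) ≤ x ^ ((3 : ℝ) / 2) := Real.one_le_rpow hx1 (by norm_num)
    have hA := hC n hn
    set A := ‖fourierCoefficient f n‖ with hAdef
    have hAnn : 0 ≤ A := norm_nonneg _
    have e1 : x ^ ((3 : ℝ) / 2) = x ^ (3 : ℕ) * x ^ (-(3 : ℝ) / 2) := by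
      rw [← Real.rpow_natCast x 3, ← Real.rpow_add hx0]
      norm_num
    have hrnn : (0 : ℝ) ≤ x ^ (-(3 : ℝ) / 2) := Real.rpow_nonneg hx0.le _
    calc t n = A * (1 + x ^ ((3 : ℝ) / 2)) := rfl
      _ ≤ A * (2 * x ^ ((3 : ℝ) / 2)) := mul_le_mul_of_nonneg_left (by linarith) hAnn
      _ = 2 * (A * x ^ (3 : ℕ)) * x ^ (-(3 : ℝ) / 2) := by rw [e1]; ring
      _ ≤ 2 * C * x ^ (-(3 : ℝ) / 2) := by
          apply mul_le_mul_of_nonneg_right _ hrnn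
          linarith
      _ = (2 * C) * x ^ (-(3 : ℝ) / 2) := by ring
  have hsum_u : Summable fun n : ℤ => (2 * C) * |(n : ℝ)| ^ (-(3 : ℝ) / 2) := by
    have := (Real.summable_abs_int_rpow (b := 3 / 2) (by norm_num)).mul_left (2 * C)
    simpa [neg_div] using this
  have hsum_t : Summable t := by
    have hv : Summable fun n : ℤ => if n = 0 then t 0 else 0 := by
      apply summable_of_ne_finset_zero (s := {(0 : ℤ)})
      intro n hn
      simp only [Finset.mem_singleton] at hn
      simp [hn]
    have hw : Summable fun n : ℤ => if n = 0 then 0 else t n := by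
      apply Summable.of_nonneg_of_le (fun n => by positivity)
        (fun n => ?_) hsum_u
      by_cases h : n = 0
      · simp [h]
      · simpa [h] using ht_bound n h
    have : t = fun n => (if n = 0 then t 0 else 0) + (if n = 0 then 0 else t n) := by
      funext n; by_cases h : n = 0 <;> simp [h]
    rw [this]
    exact hv.add hw
  have : norm32 f = ENNReal.ofReal (∑' n, t n) := by
    rw [norm32, ENNReal.ofReal_tsum_of_nonneg ht_nonneg hsum_t]
  rw [this]
  exact ENNReal.ofReal_lt_top
end

section
/- Let D be a complex inner product space and let h, e₊, e₋ : D → D be linear maps such that: (a) D is spanned by eigenvectors of h, and every eigenvalue of h is a nonnegative real number; (b) ⟨e₊ u, v⟩ = ⟨u, e₋ v⟩ for all u, v ∈ D; (c) ⁅h, e₊⁆ = e₊, ⁅h, e₋⁆ = −e₋ and ⁅e₋, e₊⁆ = 2·h. Then ‖e₋ Ψ‖ ≤ ‖h Ψ‖ and ‖e₊ Ψ‖ ≤ ‖Ψ + h Ψ‖ for every Ψ ∈ D. Moreover, for every linear combination q = a·h + b·e₊ + c·e₋ with a, b, c ∈ ℂ there exists t > 0 such that ∑_{n=0}^∞ tⁿ·‖qⁿ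 Ψ‖/n! < ∞ for every Ψ ∈ D. -/
/-!
From `e₊* = e₋` and `⁅e₋, e₊⁆ = 2h`, the operator `h` is symmetric, so its eigenspaces are mutually
orthogonal, and `⁅h, e±⁆ = ±e±` says that `e±` shifts eigenvalues by `±1`. Every vector is therefore
a finite orthogonal sum of eigenvectors, and each estimate reduces to a single eigenvector `v` with
eigenvalue `c ≥ 0`. There `‖e₊ v‖² = ‖e₋ v‖² + 2c‖v‖²` and `‖e₋ v‖² ≤ ‖e₊ e₋ v‖ ‖v‖`; since
`e₋ v` has eigenvalue `c - 1`, which is again nonnegative unless `e₋ v = 0`, induction on `⌈c⌉`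
gives `‖e₋ v‖ ≤ c‖v‖` and then `‖e₊ v‖ ≤ (1 + c)‖v‖`.

For analyticity, `q = a h + b e₊ + c e₋` maps vectors with energies `≤ m` to vectors with energies
`≤ m + 1` and multiplies their norm by at most `M (m + 1)`, `M = |a| + |b| + |c|`. Hence
`‖qⁿ Ψ‖ ≤ Mⁿ (m + 1)(m + 2)⋯(m + n) ‖Ψ‖ = Mⁿ n! (m+n choose n) ‖Ψ‖`, and the series converges for
`t < 1 / M`.
-/

open Module End Finset

namespace Module.End

section Ladder

variable {R M : Type*} [CommRing R] [AddCommGroup M] [Module R M]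

theorem apply_apply_of_lie_eq {A B C : Module.End R M} (hAB : ⁅A, B⁆ = C) (v : M) :
    A (B v) = B (A v) + C v := by
  rw [← hAB, Ring.lie_def, LinearMap.sub_apply, mul_apply, mul_apply, add_sub_cancel]

theorem apply_mem_eigenspace_of_lie_eq_smul {T A : Module.End R M} {r μ : R}
    (hA : ⁅T, A⁆ = r • A) {v : M} (hv : v ∈ eigenspace T μ) : A v ∈ eigenspace T (μ + r) := by
  rw [mem_eigenspace_iff] at hv ⊢
  rw [apply_apply_of_lie_eq hA, hv, map_smul, LinearMap.smul_apply, add_smul]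

end Ladder

section LowEnergy

variable {𝕜 E : Type*} [RCLike 𝕜]

theorem norm_apply_of_mem_eigenspace [NormedAddCommGroup E] [NormedSpace 𝕜 E]
    {T : Module.End 𝕜 E} {c : ℝ} (hc : 0 ≤ c) {v : E} (hv : v ∈ eigenspace T c) :
    ‖T v‖ = c * ‖v‖ := by
  rw [mem_eigenspace_iff.1 hv, norm_smul, RCLike.norm_ofReal, abs_of_nonneg hc]

variable [AddCommGroup E] [Module 𝕜 E] {T : Module.End 𝕜 E}

theorem nonneg_of_mem_eigenspace (heig : ∀ μ : 𝕜, HasEigenvalue T μ → ∃ c : ℝ, 0 ≤ c ∧ μ = c)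
    {c : ℝ} {v : E} (hv : v ∈ eigenspace T c) (hv0 : v ≠ 0) : 0 ≤ c := by
  obtain ⟨c', hc', hcc'⟩ := heig _ (hasEigenvalue_of_hasEigenvector ⟨hv, hv0⟩)
  rwa [RCLike.ofReal_inj.1 hcc']

def lowEnergySubspace (T : Module.End 𝕜 E) (m : ℝ) : Submodule 𝕜 E :=
  ⨆ (c : ℝ) (_ : c ≤ m), eigenspace T c

theorem eigenspace_le_lowEnergySubspace {c m : ℝ} (hcm : c ≤ m) :
    eigenspace T c ≤ T.lowEnergySubspace m :=
  le_iSup₂_of_le c hcm le_rfl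

theorem lowEnergySubspace_mono : Monotone T.lowEnergySubspace :=
  fun _ _ hmn => iSup₂_le fun _ hc => eigenspace_le_lowEnergySubspace (hc.trans hmn)

theorem apply_mem_lowEnergySubspace_of_lie_eq_smul {A : Module.End 𝕜 E} {r m : ℝ}
    (hA : ⁅T, A⁆ = (r : 𝕜) • A) {v : E} (hv : v ∈ T.lowEnergySubspace m) :
    A v ∈ T.lowEnergySubspace (m + r) := by
  have hle : T.lowEnergySubspace m ≤ (T.lowEnergySubspace (m + r)).comap A := by
    refine iSup₂_le fun c hcm w hw => ?_
    have hAw : A w ∈ eigenspace T ((c + r : ℝ) : 𝕜) := by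
      rw [RCLike.ofReal_add]
      exact apply_mem_eigenspace_of_lie_eq_smul hA hw
    exact eigenspace_le_lowEnergySubspace (by linarith) hAw
  exact hle hv

theorem exists_sum_of_mem_lowEnergySubspace {m : ℝ} {v : E} (hv : v ∈ T.lowEnergySubspace m) :
    ∃ (s : Finset ℝ) (w : ℝ → E), (∀ c ∈ s, w c ∈ eigenspace T c ∧ c ≤ m) ∧
      v = ∑ c ∈ s, w c := by
  obtain ⟨f, hf, rfl⟩ := (Submodule.mem_iSup_iff_exists_finsupp _ v).1 hv
  refine ⟨f.support, f, fun c hc => ?_, rfl⟩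
  by_cases hcm : c ≤ m
  · simpa [hcm] using hf c
  · exact absurd (by simpa [hcm] using hf c) (Finsupp.mem_support_iff.1 hc)

theorem exists_nat_mem_lowEnergySubspace
    (hspan : Submodule.span 𝕜 {v : E | ∃ μ : 𝕜, T v = μ • v} = ⊤)
    (hreal : ∀ μ : 𝕜, HasEigenvalue T μ → ∃ c : ℝ, μ = c) (v : E) :
    ∃ m : ℕ, v ∈ T.lowEnergySubspace m := by
  have hle : Submodule.span 𝕜 {v : E | ∃ μ : 𝕜, T v = μ • v} ≤
      ⨆ m : ℕ, T.lowEnergySubspace m := by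
    refine Submodule.span_le.2 fun w ⟨μ, hw⟩ => ?_
    rcases eq_or_ne w 0 with rfl | hw0
    · exact zero_mem _
    obtain ⟨c, rfl⟩ := hreal μ (hasEigenvalue_of_hasEigenvector ⟨mem_eigenspace_iff.2 hw, hw0⟩)
    exact Submodule.mem_iSup_of_mem ⌈c⌉₊
      (eigenspace_le_lowEnergySubspace (Nat.le_ceil c) (mem_eigenspace_iff.2 hw))
  rw [hspan] at hle
  exact (Submodule.mem_iSup_of_directed _
    (lowEnergySubspace_mono.comp Nat.mono_cast).directed_le).1 (hle trivial)

end LowEnergy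

end Module.End

namespace LinearMap

variable {𝕜 E : Type*} [RCLike 𝕜] [NormedAddCommGroup E] [InnerProductSpace 𝕜 E]
  {T A B : E →ₗ[𝕜] E} {r r' : 𝕜}

theorem isSymmetric_lie_of_forall_inner_eq
    (hAB : ∀ u v, inner 𝕜 (A u) v = inner 𝕜 u (B v)) : (⁅B, A⁆ : Module.End 𝕜 E).IsSymmetric := by
  have hBA : ∀ u v, inner 𝕜 (B u) v = inner 𝕜 u (A v) := fun u v => by
    rw [← inner_conj_symm, ← hAB, inner_conj_symm]
  rw [Ring.lie_def]
  refine IsSymmetric.sub (fun u v => ?_) (fun u v => ?_) <;>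
    simp only [mul_apply, hAB, hBA]

namespace IsSymmetric

theorem norm_sum_sq_of_mem_eigenspace {ι : Type*} (hT : T.IsSymmetric)
    {s : Finset ι} {μ : ι → 𝕜} (hμ : Set.InjOn μ s) {v : ι → E}
    (hv : ∀ i ∈ s, v i ∈ eigenspace T (μ i)) :
    ‖∑ i ∈ s, v i‖ ^ 2 = ∑ i ∈ s, ‖v i‖ ^ 2 := by
  have hfam := (hT.orthogonalFamily_eigenspaces.comp (f := fun i : s => μ i)
    fun i j hij => Subtype.ext (hμ i.2 j.2 hij)).norm_sum (fun i => ⟨v i, hv i i.2⟩) univ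
  simp only [Submodule.coe_subtypeₗᵢ, Submodule.coe_subtype, univ_eq_attach] at hfam
  rw [sum_attach s v] at hfam
  rw [hfam, ← sum_attach s (fun i => ‖v i‖ ^ 2)]
  rfl

theorem norm_apply_sum_le {ι : Type*} (hT : T.IsSymmetric)
    (hA : ⁅T, A⁆ = r • A) (hB : ⁅T, B⁆ = r' • B)
    {s : Finset ι} {μ : ι → 𝕜} (hμ : Set.InjOn μ s) {v : ι → E}
    (hv : ∀ i ∈ s, v i ∈ eigenspace T (μ i)) (hAB : ∀ i ∈ s, ‖A (v i)‖ ≤ ‖B (v i)‖) :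
    ‖A (∑ i ∈ s, v i)‖ ≤ ‖B (∑ i ∈ s, v i)‖ := by
  have hladder : ∀ {C : E →ₗ[𝕜] E} {ρ : 𝕜}, ⁅T, C⁆ = ρ • C →
      ‖C (∑ i ∈ s, v i)‖ ^ 2 = ∑ i ∈ s, ‖C (v i)‖ ^ 2 := fun {C ρ} hC => by
    rw [map_sum]
    exact hT.norm_sum_sq_of_mem_eigenspace (μ := fun i => μ i + ρ)
      (fun i hi j hj hij => hμ hi hj (add_right_cancel hij))
      (fun i hi => apply_mem_eigenspace_of_lie_eq_smul hC (hv i hi))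
  rw [← sq_le_sq₀ (norm_nonneg _) (norm_nonneg _), hladder hA, hladder hB]
  gcongr with i hi
  exact hAB i hi

variable {m : ℝ} {v : E}

theorem norm_apply_le_of_mem_lowEnergySubspace (hT : T.IsSymmetric)
    (heig : ∀ μ : 𝕜, HasEigenvalue T μ → ∃ c : ℝ, 0 ≤ c ∧ μ = c)
    (hA : ⁅T, A⁆ = r • A) (hB : ⁅T, B⁆ = r' • B)
    (hAB : ∀ c : ℝ, 0 ≤ c → c ≤ m → ∀ w ∈ eigenspace T c, ‖A w‖ ≤ ‖B w‖)
    (hv : v ∈ lowEnergySubspace T m) : ‖A v‖ ≤ ‖B v‖ := by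
  obtain ⟨s, w, hw, rfl⟩ := exists_sum_of_mem_lowEnergySubspace hv
  refine hT.norm_apply_sum_le hA hB RCLike.ofReal_injective.injOn (fun c hc => (hw c hc).1)
    fun c hc => ?_
  rcases eq_or_ne (w c) 0 with h0 | h0
  · simp [h0]
  exact hAB c (nonneg_of_mem_eigenspace heig (hw c hc).1 h0) (hw c hc).2 _ (hw c hc).1

theorem norm_apply_le_mul_of_mem_lowEnergySubspace (hT : T.IsSymmetric)
    (heig : ∀ μ : 𝕜, HasEigenvalue T μ → ∃ c : ℝ, 0 ≤ c ∧ μ = c)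
    (hA : ⁅T, A⁆ = r • A) {K : ℝ} (hK : 0 ≤ K)
    (hAK : ∀ c : ℝ, 0 ≤ c → c ≤ m → ∀ w ∈ eigenspace T c, ‖A w‖ ≤ K * ‖w‖)
    (hv : v ∈ lowEnergySubspace T m) : ‖A v‖ ≤ K * ‖v‖ := by
  have hnorm : ∀ w, ‖((K : 𝕜) • (1 : Module.End 𝕜 E)) w‖ = K * ‖w‖ := fun w => by
    rw [LinearMap.smul_apply, one_apply, norm_smul, RCLike.norm_ofReal, abs_of_nonneg hK]
  simpa only [hnorm] using hT.norm_apply_le_of_mem_lowEnergySubspace heig hA (r' := 0)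
    (by simp [Ring.lie_def]) (fun c hc hcm w hw => (hAK c hc hcm w hw).trans_eq (hnorm w).symm) hv

end IsSymmetric

end LinearMap

theorem norm_iterate_le_ascFactorial {E : Type*} [SeminormedAddCommGroup E] {f : E → E}
    {S : ℕ → Set E} {C : ℝ} (hC : 0 ≤ C) (hS : ∀ m, Set.MapsTo f (S m) (S (m + 1)))
    (hf : ∀ m, ∀ v ∈ S m, ‖f v‖ ≤ C * (m + 1) * ‖v‖) {m : ℕ} {v : E} (hv : v ∈ S m)
    (n : ℕ) : ‖f^[n] v‖ ≤ C ^ n * (m + 1).ascFactorial n * ‖v‖ := by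
  have hmem : ∀ k, f^[k] v ∈ S (m + k) := fun k => by
    induction k with
    | zero => exact hv
    | succ k ih =>
      rw [Function.iterate_succ_apply']
      exact hS _ ih
  induction n with
  | zero => simp
  | succ n ih =>
    rw [Function.iterate_succ_apply']
    calc ‖f (f^[n] v)‖ ≤ C * ((m + n : ℕ) + 1) * ‖f^[n] v‖ := hf _ _ (hmem n)
      _ ≤ C * ((m + n : ℕ) + 1) * (C ^ n * (m + 1).ascFactorial n * ‖v‖) := by gcongr
      _ = C ^ (n + 1) * (m + 1).ascFactorial (n + 1) * ‖v‖ := by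
        rw [Nat.ascFactorial_succ]
        push_cast
        ring

theorem summable_pow_mul_ascFactorial_div_factorial (m : ℕ) {r : ℝ} (hr0 : 0 ≤ r)
    (hr : r < 1) : Summable fun n : ℕ => r ^ n * (m + 1).ascFactorial n / n.factorial := by
  refine (summable_choose_mul_geometric_of_norm_lt_one m
    (by rwa [Real.norm_of_nonneg hr0])).congr fun n => ?_
  rw [Nat.ascFactorial_eq_factorial_mul_choose, add_comm m n, Nat.choose_symm_add]
  push_cast
  field_simp

section Sl2

variable {D : Type*} [NormedAddCommGroup D] [InnerProductSpace ℂ D] {h ep em : Module.End ℂ D}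
  (heig : ∀ μ : ℂ, HasEigenvalue h μ → ∃ c : ℝ, 0 ≤ c ∧ μ = c)
  (hadj : ∀ u v : D, inner ℂ (ep u) v = inner ℂ u (em v))
  (hc1 : ⁅h, ep⁆ = ep) (hc2 : ⁅h, em⁆ = -em) (hc3 : ⁅em, ep⁆ = (2 : ℂ) • h)
  {m : ℝ} {v : D}

include hadj hc3 in
theorem isSymmetric_of_lie_eq_two_smul : h.IsSymmetric := by
  have h2 : ((2 : ℂ) • h).IsSymmetric := hc3 ▸ LinearMap.isSymmetric_lie_of_forall_inner_eq hadj
  simpa [inv_smul_smul₀ (two_ne_zero : (2 : ℂ) ≠ 0)] using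
    h2.smul (c := (2 : ℂ)⁻¹) (by rw [map_inv₀, Complex.conj_ofNat])

include hadj hc3 in
theorem norm_ep_sq_of_mem_eigenspace {c : ℝ} (hv : v ∈ eigenspace h c) :
    ‖ep v‖ ^ 2 = ‖em v‖ ^ 2 + 2 * c * ‖v‖ ^ 2 := by
  have hcartan : ((2 : ℂ) • h) v = ((2 * c : ℝ) : ℂ) • v := by
    rw [LinearMap.smul_apply, mem_eigenspace_iff.1 hv, smul_smul]
    push_cast
    rfl
  calc ‖ep v‖ ^ 2 = RCLike.re (inner ℂ v (em (ep v))) := by rw [← hadj, inner_self_eq_norm_sq]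
    _ = RCLike.re (inner ℂ (em v) (em v)) + RCLike.re (inner ℂ v (((2 * c : ℝ) : ℂ) • v)) := by
      rw [apply_apply_of_lie_eq hc3, hcartan, inner_add_right, map_add, inner_re_symm, hadj]
    _ = ‖em v‖ ^ 2 + 2 * c * ‖v‖ ^ 2 := by
      rw [inner_self_eq_norm_sq, inner_smul_right, RCLike.re_to_complex, Complex.re_ofReal_mul,
        ← RCLike.re_to_complex, inner_self_eq_norm_sq]

include hadj in
theorem norm_em_sq_le_norm_ep_em_mul_norm (v : D) : ‖em v‖ ^ 2 ≤ ‖ep (em v)‖ * ‖v‖ := by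
  rw [← inner_self_eq_norm_sq (𝕜 := ℂ), ← hadj]
  exact re_inner_le_norm _ _

include heig hadj hc2 hc3 in
theorem norm_em_le_of_mem_eigenspace {c : ℝ} (hv : v ∈ eigenspace h c) : ‖em v‖ ≤ c * ‖v‖ := by
  obtain ⟨n, hn⟩ := exists_nat_gt c
  induction n generalizing c v with
  | zero =>
    rcases eq_or_ne v 0 with rfl | hv0
    · simp
    exact absurd (nonneg_of_mem_eigenspace heig hv hv0) (by push_cast at hn; linarith)
  | succ n ih =>
    rcases eq_or_ne v 0 with rfl | hv0
    · simp
    have hc0 := nonneg_of_mem_eigenspace heig hv hv0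
    have hw : em v ∈ eigenspace h ((c - 1 : ℝ) : ℂ) := by
      simpa [sub_eq_add_neg] using
        apply_mem_eigenspace_of_lie_eq_smul (r := -1) (by rwa [neg_one_smul]) hv
    rcases eq_or_ne (em v) 0 with hw0 | hw0
    · rw [hw0, norm_zero]
      positivity
    have hc : 1 ≤ c := by linarith [nonneg_of_mem_eigenspace (c := c - 1) heig hw hw0]
    have hem : ‖em (em v)‖ ≤ (c - 1) * ‖em v‖ := ih hw (by push_cast at hn; linarith)
    have hep : ‖ep (em v)‖ ≤ c * ‖em v‖ := by
      rw [← sq_le_sq₀ (norm_nonneg _) (by positivity), norm_ep_sq_of_mem_eigenspace hadj hc3 hw]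
      nlinarith [pow_le_pow_left₀ (norm_nonneg _) hem 2, norm_nonneg (em v)]
    refine le_of_mul_le_mul_left ?_ (norm_pos_iff.2 hw0)
    calc ‖em v‖ * ‖em v‖ = ‖em v‖ ^ 2 := (sq _).symm
      _ ≤ ‖ep (em v)‖ * ‖v‖ := norm_em_sq_le_norm_ep_em_mul_norm hadj v
      _ ≤ c * ‖em v‖ * ‖v‖ := by gcongr
      _ = ‖em v‖ * (c * ‖v‖) := by ring

include heig hadj hc2 hc3 in
theorem norm_ep_le_of_mem_eigenspace {c : ℝ} (hc : 0 ≤ c) (hv : v ∈ eigenspace h c) :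
    ‖ep v‖ ≤ (1 + c) * ‖v‖ := by
  have hem := norm_em_le_of_mem_eigenspace heig hadj hc2 hc3 hv
  rw [← sq_le_sq₀ (norm_nonneg _) (by positivity), norm_ep_sq_of_mem_eigenspace hadj hc3 hv]
  nlinarith [pow_le_pow_left₀ (norm_nonneg _) hem 2, norm_nonneg v]

include heig hadj hc2 hc3 in
theorem norm_em_le_norm_h_of_mem_lowEnergySubspace (hv : v ∈ lowEnergySubspace h m) :
    ‖em v‖ ≤ ‖h v‖ :=
  (isSymmetric_of_lie_eq_two_smul hadj hc3).norm_apply_le_of_mem_lowEnergySubspace heig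
    (r := -1) (r' := 0) (by rwa [neg_one_smul])
    (by simpa using commute_iff_lie_eq.1 (.refl h))
    (fun _ hc _ _ hw => (norm_apply_of_mem_eigenspace hc hw).symm ▸
      norm_em_le_of_mem_eigenspace heig hadj hc2 hc3 hw) hv

include heig hadj hc1 hc2 hc3 in
theorem norm_ep_le_norm_add_h_of_mem_lowEnergySubspace (hv : v ∈ lowEnergySubspace h m) :
    ‖ep v‖ ≤ ‖v + h v‖ := by
  have hB : ∀ {c : ℝ}, 0 ≤ c → ∀ w ∈ eigenspace h c, ‖(1 + h) w‖ = (1 + c) * ‖w‖ :=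
    fun {c} hc w hw => by
      have hsum : w + (c : ℂ) • w = ((1 + c : ℝ) : ℂ) • w := by
        rw [Complex.ofReal_add, Complex.ofReal_one, add_smul, one_smul]
      rw [LinearMap.add_apply, one_apply, mem_eigenspace_iff.1 hw, hsum, norm_smul,
        Complex.norm_real, Real.norm_of_nonneg (by positivity)]
  exact (isSymmetric_of_lie_eq_two_smul hadj hc3).norm_apply_le_of_mem_lowEnergySubspace heig
    (r := 1) (r' := 0) (B := 1 + h) (by rwa [one_smul])
    (by simpa using commute_iff_lie_eq.1 ((Commute.one_right h).add_right (.refl h)))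
    (fun _ hc _ _ hw => (hB hc _ hw).symm ▸
      norm_ep_le_of_mem_eigenspace heig hadj hc2 hc3 hc hw) hv

include hc1 hc2 in
theorem sl2_apply_mem_lowEnergySubspace (a b c : ℂ) (hv : v ∈ lowEnergySubspace h m) :
    (a • h + b • ep + c • em) v ∈ lowEnergySubspace h (m + 1) := by
  have hmem : ∀ {X : Module.End ℂ D} {r : ℝ}, r ≤ 1 → ⁅h, X⁆ = (r : ℂ) • X →
      X v ∈ lowEnergySubspace h (m + 1) := fun hr hX =>
    lowEnergySubspace_mono (by linarith) (apply_mem_lowEnergySubspace_of_lie_eq_smul hX hv)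
  simp only [LinearMap.add_apply, LinearMap.smul_apply]
  refine add_mem (add_mem (Submodule.smul_mem _ _ ?_) (Submodule.smul_mem _ _ ?_))
    (Submodule.smul_mem _ _ ?_)
  · exact hmem (r := 0) zero_le_one (by simpa using commute_iff_lie_eq.1 (.refl h))
  · exact hmem (r := 1) le_rfl (by simpa using hc1)
  · exact hmem (r := -1) (by norm_num) (by simpa using hc2)

include heig hadj hc1 hc2 hc3 in
theorem norm_sl2_apply_le_of_mem_lowEnergySubspace (a b c : ℂ) (hm : 0 ≤ m)
    (hv : v ∈ lowEnergySubspace h m) :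
    ‖(a • h + b • ep + c • em) v‖ ≤ (‖a‖ + ‖b‖ + ‖c‖) * (m + 1) * ‖v‖ := by
  have hbound : ∀ {X : Module.End ℂ D} {r : ℂ}, ⁅h, X⁆ = r • X →
      (∀ c : ℝ, 0 ≤ c → ∀ w ∈ eigenspace h c, ‖X w‖ ≤ (1 + c) * ‖w‖) →
      ‖X v‖ ≤ (m + 1) * ‖v‖ := fun hX hXc =>
    (isSymmetric_of_lie_eq_two_smul hadj hc3).norm_apply_le_mul_of_mem_lowEnergySubspace heig
      hX (by positivity) (fun c hc hcm w hw => (hXc c hc w hw).trans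
        (mul_le_mul_of_nonneg_right (by linarith) (norm_nonneg w))) hv
  have hh := hbound (X := h) (r := 0) (by simpa using commute_iff_lie_eq.1 (.refl h))
    fun c hc w hw => by
      rw [norm_apply_of_mem_eigenspace hc hw]
      exact mul_le_mul_of_nonneg_right (by linarith) (norm_nonneg w)
  have hep := hbound (r := 1) (by rwa [one_smul]) fun _ hc _ hw =>
    norm_ep_le_of_mem_eigenspace heig hadj hc2 hc3 hc hw
  have hem := hbound (r := -1) (by rwa [neg_one_smul]) fun c _ w hw =>
    (norm_em_le_of_mem_eigenspace heig hadj hc2 hc3 hw).trans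
      (mul_le_mul_of_nonneg_right (by linarith) (norm_nonneg w))
  calc ‖(a • h + b • ep + c • em) v‖ ≤ ‖a‖ * ‖h v‖ + ‖b‖ * ‖ep v‖ + ‖c‖ * ‖em v‖ := by
        simp only [LinearMap.add_apply, LinearMap.smul_apply, ← norm_smul]
        exact norm_add₃_le
    _ ≤ ‖a‖ * ((m + 1) * ‖v‖) + ‖b‖ * ((m + 1) * ‖v‖) + ‖c‖ * ((m + 1) * ‖v‖) := by gcongr
    _ = (‖a‖ + ‖b‖ + ‖c‖) * (m + 1) * ‖v‖ := by ring

include heig hadj hc1 hc2 hc3 in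
theorem norm_sl2_pow_apply_le_of_mem_lowEnergySubspace (a b c : ℂ) {k : ℕ}
    (hv : v ∈ lowEnergySubspace h k) (n : ℕ) :
    ‖((a • h + b • ep + c • em) ^ n) v‖ ≤
      (‖a‖ + ‖b‖ + ‖c‖) ^ n * (k + 1).ascFactorial n * ‖v‖ := by
  rw [pow_apply]
  refine norm_iterate_le_ascFactorial (S := fun j : ℕ => lowEnergySubspace h j) (by positivity)
    (fun j w hw => ?_) (fun j w hw => ?_) hv n
  · exact_mod_cast sl2_apply_mem_lowEnergySubspace hc1 hc2 a b c hw
  · exact norm_sl2_apply_le_of_mem_lowEnergySubspace heig hadj hc1 hc2 hc3 a b c j.cast_nonneg hw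

end Sl2

/-- Energy bounds and analyticity of vectors for a positive energy unitary
representation `(h, e₊, e₋)` of `sl(2,ℝ)` on an inner product space `D`
(here `ep` is `e₊` and `em` is `e₋`). -/
theorem sl2_energy_bounds_and_analytic_vectors
    {D : Type*} [NormedAddCommGroup D] [InnerProductSpace ℂ D]
    (h ep em : Module.End ℂ D)
    (hspan : Submodule.span ℂ {v : D | ∃ μ : ℂ, h v = μ • v} = ⊤)
    (heig : ∀ μ : ℂ, Module.End.HasEigenvalue h μ → ∃ c : ℝ, 0 ≤ c ∧ μ = (c : ℂ))
    (hadj : ∀ u v : D, (inner ℂ (ep u) v : ℂ) = inner ℂ u (em v))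
    (hc1 : ⁅h, ep⁆ = ep) (hc2 : ⁅h, em⁆ = -em) (hc3 : ⁅em, ep⁆ = (2 : ℂ) • h) :
    (∀ Ψ : D, ‖em Ψ‖ ≤ ‖h Ψ‖ ∧ ‖ep Ψ‖ ≤ ‖Ψ + h Ψ‖) ∧
      ∀ a b c : ℂ, ∃ t : ℝ, 0 < t ∧ ∀ Ψ : D,
        Summable (fun n : ℕ =>
          t ^ n * ‖((a • h + b • ep + c • em) ^ n) Ψ‖ / (n.factorial : ℝ)) := by
  have hlow : ∀ Ψ : D, ∃ m : ℕ, Ψ ∈ lowEnergySubspace h m :=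
    exists_nat_mem_lowEnergySubspace hspan fun μ hμ => (heig μ hμ).imp fun _ hc => hc.2
  refine ⟨fun Ψ => ?_, fun a b c => ?_⟩
  · obtain ⟨m, hΨ⟩ := hlow Ψ
    exact ⟨norm_em_le_norm_h_of_mem_lowEnergySubspace heig hadj hc2 hc3 hΨ,
      norm_ep_le_norm_add_h_of_mem_lowEnergySubspace heig hadj hc1 hc2 hc3 hΨ⟩
  set M := ‖a‖ + ‖b‖ + ‖c‖
  have hratio : (M + 1)⁻¹ * M < 1 := by
    rw [inv_mul_lt_one₀ (by positivity)]
    linarith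
  refine ⟨(M + 1)⁻¹, by positivity, fun Ψ => ?_⟩
  obtain ⟨m, hΨ⟩ := hlow Ψ
  refine .of_nonneg_of_le (fun n => by positivity) (fun n => ?_)
    ((summable_pow_mul_ascFactorial_div_factorial m (by positivity) hratio).mul_left ‖Ψ‖)
  calc (M + 1)⁻¹ ^ n * ‖((a • h + b • ep + c • em) ^ n) Ψ‖ / n.factorial
      ≤ (M + 1)⁻¹ ^ n * (M ^ n * (m + 1).ascFactorial n * ‖Ψ‖) / n.factorial := by
        gcongr
        exact norm_sl2_pow_apply_le_of_mem_lowEnergySubspace heig hadj hc1 hc2 hc3 a b c hΨ n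
    _ = ‖Ψ‖ * (((M + 1)⁻¹ * M) ^ n * (m + 1).ascFactorial n / n.factorial) := by
        rw [mul_pow]
        ring
end

section
/- Let a, b, c, d ∈ ℂ with |a|² − |b|² = 1 and |c|² − |d|² = 1, and let z₀ ∈ ℂ with |z₀| = 1. The maps φ_{a,b} and φ_{c,d} are complex differentiable on a neighbourhood of the unit circle (their poles −conj(a)/conj(b) and −conj(c)/conj(d) lie outside the closed unit disc). If φ_{a,b}(z₀) = φ_{c,d}(z₀), φ_{a,b}'(z₀) = φ_{c,d}'(z₀) and φ_{a,b}''(z₀) = φ_{c,d}''(z₀) (first and second complex derivatives), then φ_{a,b}(z) = φ_{c,d}(z) for every z ∈ ℂ with |z| = 1. -/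
/-!
Since `a * conj a - b * conj b = 1`, the derivative of `mobiusMap a b` is `(conj b * z + conj a)⁻²`
and its second derivative is `-2 conj b (conj b * z + conj a)⁻³`. Equal first derivatives force the
denominators at `z₀` to agree up to sign, and then equal second derivatives force
`(conj a, conj b) = ± (conj c, conj d)`; the map is unchanged when `(a, b)` changes sign.
-/

/-- The Möbius transformation of the circle associated to `a b : ℂ`
with `|a|² - |b|² = 1`. -/
noncomputable def mobiusMap (a b z : ℂ) : ℂ :=
  (a * z + b) / ((starRingEnd ℂ) b * z + (starRingEnd ℂ) a)

open ComplexConjugate Topology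

namespace MobiusCircle

variable {a b z : ℂ}

lemma mul_conj_sub_mul_conj_eq_one (hab : ‖a‖ ^ 2 - ‖b‖ ^ 2 = 1) :
    a * conj a - b * conj b = 1 := by
  rw [Complex.mul_conj, Complex.mul_conj, ← Complex.ofReal_sub, ← Complex.sq_norm,
    ← Complex.sq_norm, hab, Complex.ofReal_one]

lemma conj_mul_add_conj_ne_zero (hab : ‖a‖ ^ 2 - ‖b‖ ^ 2 = 1) (hz : ‖z‖ ≤ 1) :
    conj b * z + conj a ≠ 0 := by
  intro h
  have hnorm : ‖a‖ = ‖b‖ * ‖z‖ := by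
    simpa using congrArg norm (eq_neg_of_add_eq_zero_right h)
  have : ‖a‖ ≤ ‖b‖ := hnorm ▸ mul_le_of_le_one_right (norm_nonneg b) hz
  nlinarith [norm_nonneg a]

lemma analyticAt_mobiusMap (hz : conj b * z + conj a ≠ 0) : AnalyticAt ℂ (mobiusMap a b) z :=
  ((analyticAt_const.mul analyticAt_id).add analyticAt_const).div
    ((analyticAt_const.mul analyticAt_id).add analyticAt_const) hz

lemma hasDerivAt_affine (a b z : ℂ) : HasDerivAt (fun w => a * w + b) a z := by
  simpa using ((hasDerivAt_id z).const_mul a).add_const b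

lemma hasDerivAt_mobiusMap (hdet : a * conj a - b * conj b = 1)
    (hz : conj b * z + conj a ≠ 0) :
    HasDerivAt (mobiusMap a b) ((conj b * z + conj a) ^ 2)⁻¹ z := by
  refine ((hasDerivAt_affine a b z).div (hasDerivAt_affine (conj b) (conj a) z) hz).congr_deriv ?_
  rw [inv_eq_one_div]
  congr 1
  linear_combination hdet

lemma deriv_mobiusMap_eventuallyEq (hdet : a * conj a - b * conj b = 1)
    (hz : conj b * z + conj a ≠ 0) :
    deriv (mobiusMap a b) =ᶠ[𝓝 z] fun w => ((conj b * w + conj a) ^ 2)⁻¹ := by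
  have hopen : IsOpen {w : ℂ | conj b * w + conj a ≠ 0} :=
    isOpen_ne_fun (by fun_prop) continuous_const
  filter_upwards [hopen.mem_nhds hz] with w hw
  exact (hasDerivAt_mobiusMap hdet hw).deriv

lemma deriv_deriv_mobiusMap (hdet : a * conj a - b * conj b = 1)
    (hz : conj b * z + conj a ≠ 0) :
    deriv (deriv (mobiusMap a b)) z = -(2 * conj b) / (conj b * z + conj a) ^ 3 := by
  rw [(deriv_mobiusMap_eventuallyEq hdet hz).deriv_eq]
  refine (((hasDerivAt_affine (conj b) (conj a) z).pow 2).inv (pow_ne_zero 2 hz)).deriv.trans ?_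
  simp only [Pi.pow_apply]
  field_simp
  ring

/-- The function `w ↦ (β w + α)⁻²` and its derivative at one point determine `(α, β)` up to sign. -/
lemma eq_or_eq_neg_of_inv_sq_jet_eq {α β γ δ : ℂ} (hv : δ * z + γ ≠ 0)
    (h₁ : ((β * z + α) ^ 2)⁻¹ = ((δ * z + γ) ^ 2)⁻¹)
    (h₂ : -(2 * β) / (β * z + α) ^ 3 = -(2 * δ) / (δ * z + γ) ^ 3) :
    (α = γ ∧ β = δ) ∨ (α = -γ ∧ β = -δ) := by
  have hv3 : (δ * z + γ) ^ 3 ≠ 0 := pow_ne_zero 3 hv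
  rcases sq_eq_sq_iff_eq_or_eq_neg.mp (inv_injective h₁) with h | h
  · rw [h] at h₂
    have hβ : β = δ := by simpa using (div_left_inj' hv3).mp h₂
    exact Or.inl ⟨by linear_combination h - z * hβ, hβ⟩
  · rw [h, Odd.neg_pow (by decide), div_neg, neg_div, neg_div, neg_neg, ← neg_div,
      div_left_inj' hv3] at h₂
    have hβ : β = -δ := by linear_combination h₂ / 2
    exact Or.inr ⟨by linear_combination h - z * hβ, hβ⟩

lemma mobiusMap_neg (a b : ℂ) : mobiusMap (-a) (-b) = mobiusMap a b := by
  ext z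
  simp only [mobiusMap, map_neg, neg_mul, ← neg_add, neg_div_neg_eq]

end MobiusCircle

open MobiusCircle in
/-- Möbius transformations of the circle are complex differentiable
(indeed analytic) on a neighbourhood of the unit circle, and such a
transformation is determined by its value together with its first and second
complex derivatives at a single point of the circle. -/
theorem mobius_determined_by_two_jets_at_a_point (a b c d : ℂ)
    (hab : ‖a‖ ^ 2 - ‖b‖ ^ 2 = 1)
    (hcd : ‖c‖ ^ 2 - ‖d‖ ^ 2 = 1)
    (z₀ : ℂ) (hz₀ : ‖z₀‖ = 1) :
    (∀ z : ℂ, ‖z‖ = 1 →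
      AnalyticAt ℂ (mobiusMap a b) z ∧ AnalyticAt ℂ (mobiusMap c d) z) ∧
    (mobiusMap a b z₀ = mobiusMap c d z₀ →
      deriv (mobiusMap a b) z₀ = deriv (mobiusMap c d) z₀ →
      deriv (deriv (mobiusMap a b)) z₀ = deriv (deriv (mobiusMap c d)) z₀ →
      ∀ z : ℂ, ‖z‖ = 1 → mobiusMap a b z = mobiusMap c d z) := by
  refine ⟨fun z hz => ⟨analyticAt_mobiusMap (conj_mul_add_conj_ne_zero hab hz.le),
    analyticAt_mobiusMap (conj_mul_add_conj_ne_zero hcd hz.le)⟩, fun _ h₁ h₂ z _ => ?_⟩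
  have hdab := mul_conj_sub_mul_conj_eq_one hab
  have hdcd := mul_conj_sub_mul_conj_eq_one hcd
  have hu := conj_mul_add_conj_ne_zero hab hz₀.le
  have hv := conj_mul_add_conj_ne_zero hcd hz₀.le
  rw [(hasDerivAt_mobiusMap hdab hu).deriv, (hasDerivAt_mobiusMap hdcd hv).deriv] at h₁
  rw [deriv_deriv_mobiusMap hdab hu, deriv_deriv_mobiusMap hdcd hv] at h₂
  rcases eq_or_eq_neg_of_inv_sq_jet_eq hv h₁ h₂ with ⟨ha, hb⟩ | ⟨ha, hb⟩
  · rw [(starRingEnd ℂ).injective ha, (starRingEnd ℂ).injective hb]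
  · rw [← map_neg, (starRingEnd ℂ).injective.eq_iff] at ha hb
    rw [ha, hb, mobiusMap_neg]
end

section
/- Let a, b ∈ ℂ with |a|² − |b|² = 1, and suppose that φ_{a,b} maps the open upper half circle S¹₊ := {z ∈ ℂ : |z| = 1, Im z > 0} onto itself. Then there exists s ∈ ℝ such that φ_{a,b}(z) = ((e^s + 1)·z + (e^s − 1))/((e^s − 1)·z + (e^s + 1)) for all z ∈ ℂ with |z| = 1. -/
open Complex ComplexConjugate Set

def upperHalfCircle : Set ℂ := {z | ‖z‖ = 1 ∧ 0 < z.im}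

section Circle

variable {a b z : ℂ}

lemma mul_conj_eq_one_of_norm_eq_one (hz : ‖z‖ = 1) : z * conj z = 1 := by
  rw [mul_conj', hz, ofReal_one, one_pow]

lemma mobiusMap_denom_ne_zero (hab : ‖a‖ ≠ ‖b‖) (hz : ‖z‖ = 1) :
    conj b * z + conj a ≠ 0 := by
  intro h
  apply hab
  simpa [hz] using congrArg norm (eq_neg_of_add_eq_zero_right h)

lemma mobiusMap_denom_eq_conj (hz : ‖z‖ = 1) :
    conj b * z + conj a = conj (conj z * (a * z + b)) := by
  simp only [map_mul, map_add, conj_conj]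
  linear_combination (-conj a) * mul_conj_eq_one_of_norm_eq_one hz

lemma norm_mobiusMap (hab : ‖a‖ ≠ ‖b‖) (hz : ‖z‖ = 1) : ‖mobiusMap a b z‖ = 1 := by
  have hD := mobiusMap_denom_ne_zero hab hz
  rw [mobiusMap_denom_eq_conj hz] at hD
  rw [mobiusMap, mobiusMap_denom_eq_conj hz, norm_div, norm_conj, norm_mul, norm_conj, hz,
    one_mul, div_self (norm_ne_zero_iff.mpr fun h ↦ hD (by simp [h]))]

lemma mobiusMap_inj (hab : ‖a‖ ≠ ‖b‖) {w : ℂ} (hz : ‖z‖ = 1) (hw : ‖w‖ = 1)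
    (h : mobiusMap a b z = mobiusMap a b w) : z = w := by
  have hnorm : a * conj a - b * conj b ≠ 0 := by
    rw [mul_conj, mul_conj, ← ofReal_sub, ofReal_ne_zero, normSq_eq_norm_sq, normSq_eq_norm_sq,
      sub_ne_zero]
    exact fun h ↦ hab (by nlinarith [norm_nonneg a, norm_nonneg b])
  rw [mobiusMap, mobiusMap, div_eq_div_iff (mobiusMap_denom_ne_zero hab hz)
    (mobiusMap_denom_ne_zero hab hw)] at h
  have : (z - w) * (a * conj a - b * conj b) = 0 := by linear_combination h
  exact sub_eq_zero.mp ((mul_eq_zero.mp this).resolve_right hnorm)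

/-- `Im (N / D) = Im (N * conj D) / |D|²`, and `N * conj D` simplifies since `z * conj z = 1`. -/
lemma im_mobiusMap (hz : ‖z‖ = 1) :
    (mobiusMap a b z).im =
      (a ^ 2 * z + b ^ 2 * conj z + 2 * a * b).im / normSq (conj b * z + conj a) := by
  have hprod : a ^ 2 * z + b ^ 2 * conj z + 2 * a * b =
      (a * z + b) * conj (conj b * z + conj a) := by
    simp only [map_add, map_mul, conj_conj]
    linear_combination (-(a * b)) * mul_conj_eq_one_of_norm_eq_one hz
  rw [hprod, mobiusMap, div_im, mul_im, conj_re, conj_im]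
  ring

lemma im_mobiusMap_pos_iff (hab : ‖a‖ ≠ ‖b‖) (hz : ‖z‖ = 1) :
    0 < (mobiusMap a b z).im ↔ 0 < (a ^ 2 * z + b ^ 2 * conj z + 2 * a * b).im := by
  rw [im_mobiusMap hz, div_pos_iff_of_pos_right (normSq_pos.mpr (mobiusMap_denom_ne_zero hab hz))]

end Circle

lemma exp_mul_I_mem_closure_upperHalfCircle {t : ℝ} (ht : t ∈ Icc 0 Real.pi) :
    exp (t * I) ∈ closure upperHalfCircle := by
  refine map_mem_closure (f := fun s : ℝ ↦ exp (s * I)) (by fun_prop)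
    (by rwa [closure_Ioo Real.pi_pos.ne]) fun s hs ↦ ⟨norm_exp_ofReal_mul_I s, ?_⟩
  rw [exp_ofReal_mul_I_im]
  exact Real.sin_pos_of_pos_of_lt_pi hs.1 hs.2

lemma nonneg_on_closure_of_pos {X : Type*} [TopologicalSpace X] {f : X → ℝ} (hf : Continuous f)
    {s : Set X} (hpos : ∀ x ∈ s, 0 < f x) {x : X} (hx : x ∈ closure s) : 0 ≤ f x :=
  closure_lt_subset_le continuous_const hf (closure_mono hpos hx)

section Preserving

variable {a b : ℂ} (hab : ‖a‖ ≠ ‖b‖) (hpres : mobiusMap a b '' upperHalfCircle = upperHalfCircle)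
include hab hpres

lemma im_numerator_pos_of_mem_upperHalfCircle {z : ℂ} (hz : z ∈ upperHalfCircle) :
    0 < (a ^ 2 * z + b ^ 2 * conj z + 2 * a * b).im :=
  (im_mobiusMap_pos_iff hab hz.1).mp (hpres ▸ mem_image_of_mem _ hz : _ ∈ upperHalfCircle).2

lemma im_numerator_nonpos_of_im_nonpos {z : ℂ} (hz : ‖z‖ = 1) (hzim : z.im ≤ 0) :
    (a ^ 2 * z + b ^ 2 * conj z + 2 * a * b).im ≤ 0 := by
  rw [← not_lt, ← im_mobiusMap_pos_iff hab hz]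
  intro him
  obtain ⟨w, hw, hwz⟩ : mobiusMap a b z ∈ mobiusMap a b '' upperHalfCircle := by
    rw [hpres]; exact ⟨norm_mobiusMap hab hz, him⟩
  exact hzim.not_gt (mobiusMap_inj hab hw.1 hz hwz ▸ hw.2)

end Preserving

lemma im_eq_zero_of_im_sq_eq_zero {u v : ℂ} (hu : (u ^ 2).im = 0) (huv : 0 < (u * v).re)
    (huv' : 0 < (u * conj v).re) : u.im = 0 := by
  have hre_im : u.re * u.im = 0 := by rw [sq, mul_im] at hu; linarith
  rcases mul_eq_zero.mp hre_im with hre | him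
  · rw [mul_re, hre] at huv
    rw [mul_re, conj_re, conj_im, hre] at huv'
    linarith
  · exact him

lemma re_add_mul_conj_sub (a b : ℂ) : ((a + b) * conj (a - b)).re = ‖a‖ ^ 2 - ‖b‖ ^ 2 := by
  rw [← normSq_eq_norm_sq, ← normSq_eq_norm_sq, normSq_apply, normSq_apply]
  simp only [mul_re, add_re, add_im, conj_re, conj_im, sub_re, sub_im]
  ring

lemma im_eq_zero_of_preserves_upperHalfCircle {a b : ℂ} (hab : ‖b‖ < ‖a‖)
    (hpres : mobiusMap a b '' upperHalfCircle = upperHalfCircle) : a.im = 0 ∧ b.im = 0 := by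
  set n : ℂ → ℝ := fun z ↦ (a ^ 2 * z + b ^ 2 * conj z + 2 * a * b).im with hn
  have hab' : ‖a‖ ≠ ‖b‖ := hab.ne'
  have hn_cont : Continuous n := by fun_prop
  have hn_closure : ∀ t ∈ Icc 0 Real.pi, 0 ≤ n (exp (t * I)) := fun t ht ↦
    nonneg_on_closure_of_pos hn_cont
      (fun _ hz ↦ im_numerator_pos_of_mem_upperHalfCircle hab' hpres hz)
      (exp_mul_I_mem_closure_upperHalfCircle ht)
  have hn_one : n 1 = ((a + b) ^ 2).im := by simp only [hn, map_one]; ring_nf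
  have hn_neg_one : n (-1) = -((a - b) ^ 2).im := by
    simp only [hn, map_neg, map_one, ← neg_im]; ring_nf
  have hn_I : n I = ((a + b) * (a - b)).re + (((a + b) ^ 2).im - ((a - b) ^ 2).im) / 2 := by
    have : a ^ 2 * I + b ^ 2 * conj I + 2 * a * b =
        I * ((a + b) * (a - b)) + ((a + b) ^ 2 - (a - b) ^ 2) / 2 := by rw [conj_I]; ring
    simp only [hn]
    rw [this, add_im, I_mul_im, div_ofNat_im, sub_im]
  have hplus : ((a + b) ^ 2).im = 0 := by
    have h0 := hn_closure 0 ⟨le_rfl, Real.pi_pos.le⟩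
    have h1 := im_numerator_nonpos_of_im_nonpos hab' hpres (z := 1) (by simp) (by simp)
    simp only [ofReal_zero, zero_mul, exp_zero] at h0
    linarith
  have hminus : ((a - b) ^ 2).im = 0 := by
    have hπ := hn_closure Real.pi ⟨Real.pi_pos.le, le_rfl⟩
    have h1 := im_numerator_nonpos_of_im_nonpos hab' hpres (z := -1) (by simp) (by simp)
    rw [exp_pi_mul_I] at hπ
    linarith
  have hre : 0 < ((a + b) * (a - b)).re := by
    have := im_numerator_pos_of_mem_upperHalfCircle hab' hpres (z := I) ⟨by simp, by simp⟩
    linarith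
  have hnorm : 0 < ((a + b) * conj (a - b)).re := by
    rw [re_add_mul_conj_sub]; nlinarith [norm_nonneg b]
  have hsum := im_eq_zero_of_im_sq_eq_zero hplus hre hnorm
  have hdiff := im_eq_zero_of_im_sq_eq_zero hminus (by rwa [mul_comm])
    (by rwa [← conj_re, map_mul, conj_conj, mul_comm])
  rw [add_im] at hsum
  rw [sub_im] at hdiff
  constructor <;> linarith

lemma mobiusMap_ofReal (x y : ℝ) (hxy : x ^ 2 - y ^ 2 = 1) (z : ℂ) :
    mobiusMap x y z = ((↑((x + y) ^ 2) + 1) * z + (↑((x + y) ^ 2) - 1)) /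
      ((↑((x + y) ^ 2) - 1) * z + (↑((x + y) ^ 2) + 1)) := by
  have hxy' : (x : ℂ) ^ 2 - (y : ℂ) ^ 2 = 1 := by exact_mod_cast hxy
  have hsum : (2 * (x + y) : ℂ) ≠ 0 :=
    mul_ne_zero two_ne_zero
      (left_ne_zero_of_mul_eq_one (by linear_combination hxy' : ((x : ℂ) + y) * (x - y) = 1))
  rw [mobiusMap, conj_ofReal, conj_ofReal, ← mul_div_mul_left _ _ hsum]
  push_cast
  congr 1
  · linear_combination (z - 1) * hxy'
  · linear_combination (1 - z) * hxy'

/-- A Möbius transformation of the circle mapping the open upper half circle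
onto itself is a dilation `δ_s` for some `s ∈ ℝ`. -/
theorem mobius_preserving_upper_halfcircle_is_dilation (a b : ℂ)
    (hab : ‖a‖ ^ 2 - ‖b‖ ^ 2 = 1)
    (hpres : mobiusMap a b '' {z : ℂ | ‖z‖ = 1 ∧ 0 < z.im} =
      {z : ℂ | ‖z‖ = 1 ∧ 0 < z.im}) :
    ∃ s : ℝ, ∀ z : ℂ, ‖z‖ = 1 →
      mobiusMap a b z = (((Real.exp s : ℂ) + 1) * z + ((Real.exp s : ℂ) - 1)) /
        (((Real.exp s : ℂ) - 1) * z + ((Real.exp s : ℂ) + 1)) := by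
  have hlt : ‖b‖ < ‖a‖ := by nlinarith [norm_nonneg a, norm_nonneg b]
  obtain ⟨ha, hb⟩ := im_eq_zero_of_preserves_upperHalfCircle hlt hpres
  lift a to ℝ using ha
  lift b to ℝ using hb
  have hab' : a ^ 2 - b ^ 2 = 1 := by simpa [Real.norm_eq_abs, sq_abs] using hab
  have hpos : 0 < (a + b) ^ 2 :=
    sq_pos_iff.mpr (left_ne_zero_of_mul_eq_one (by linear_combination hab' : (a + b) * (a - b) = 1))
  refine ⟨Real.log ((a + b) ^ 2), fun z _ ↦ ?_⟩
  rw [Real.exp_log hpos, mobiusMap_ofReal a b hab' z]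
end

section
/- Let θ₁ < θ₂ < θ₃ < θ₁ + 2π be real numbers and let f : ℝ → ℝ be 2π-periodic and differentiable at every point. Suppose there are real numbers α_k, β_k, γ_k (k = 1, 2, 3) such that f(θ) = α₁ + β₁·cos θ + γ₁·sin θ for all θ ∈ [θ₁, θ₂], f(θ) = α₂ + β₂·cos θ + γ₂·sin θ for all θ ∈ [θ₂, θ₃], and f(θ) = α₃ + β₃·cos θ + γ₃·sin θ for all θ ∈ [θ₃, θ₁ + 2π]. Then f(θ) = α₁ + β₁·cos θ + γ₁·sin θ for all θ ∈ ℝ; in particular the three triples (α_k, β_k, γ_k) coincide. -/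
/-!
Comparing values and one-sided derivatives at a junction θ shows that two adjacent pieces differ
by a multiple `a • (1 - cos (x - θ))` of the Möbius field tangent to zero at θ. Going once around
the circle, the three differences add up to zero, so `∑ aₖ (1, cos θₖ, sin θₖ) = 0`. Three distinct
points of the circle give linearly independent vectors `(1, cos θ, sin θ)`: their determinant is
`4 sin ((θ₂ - θ₁) / 2) sin ((θ₃ - θ₂) / 2) sin ((θ₃ - θ₁) / 2) > 0`. Hence all `aₖ` vanish.
-/

open Set Real

noncomputable def mobius (α β γ : ℝ) (x : ℝ) : ℝ := α + β * cos x + γ * sin x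

theorem hasDerivAt_mobius (α β γ x : ℝ) :
    HasDerivAt (mobius α β γ) (-(β * sin x) + γ * cos x) x := by
  have h := ((hasDerivAt_const x α).add ((hasDerivAt_cos x).const_mul β)).add
    ((hasDerivAt_sin x).const_mul γ)
  exact h.congr_deriv (by ring)

theorem mobius_periodic (α β γ : ℝ) : Function.Periodic (mobius α β γ) (2 * π) := by
  intro x
  simp only [mobius, cos_add_two_pi, sin_add_two_pi]

theorem deriv_eq_of_eqOn_Icc {f g : ℝ → ℝ} {a b x : ℝ} (hab : a < b) (hx : x ∈ Icc a b)
    (hf : DifferentiableAt ℝ f x) (hg : DifferentiableAt ℝ g x) (h : EqOn f g (Icc a b)) :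
    deriv f x = deriv g x := by
  have hu := uniqueDiffOn_Icc hab x hx
  rw [← hf.derivWithin hu, ← hg.derivWithin hu]
  exact derivWithin_congr h (h hx)

theorem mobius_coeff_sub_of_tangent {α β γ α' β' γ' θ : ℝ}
    (hval : mobius α β γ θ = mobius α' β' γ' θ)
    (hder : -(β * sin θ) + γ * cos θ = -(β' * sin θ) + γ' * cos θ) :
    β - β' = -(α - α') * cos θ ∧ γ - γ' = -(α - α') * sin θ := by
  unfold mobius at hval
  have hpyth := sin_sq_add_cos_sq θ
  constructor
  · linear_combination cos θ * hval - sin θ * hder - (β - β') * hpyth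
  · linear_combination sin θ * hval + cos θ * hder - (γ - γ') * hpyth

theorem mobius_coeff_sub_of_junction {f : ℝ → ℝ} {a θ b α β γ α' β' γ' : ℝ}
    (haθ : a < θ) (hθb : θ < b) (hf : DifferentiableAt ℝ f θ)
    (hl : EqOn f (mobius α β γ) (Icc a θ)) (hr : EqOn f (mobius α' β' γ') (Icc θ b)) :
    β - β' = -(α - α') * cos θ ∧ γ - γ' = -(α - α') * sin θ := by
  refine mobius_coeff_sub_of_tangent ((hl ⟨haθ.le, le_rfl⟩).symm.trans (hr ⟨le_rfl, hθb.le⟩)) ?_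
  rw [← (hasDerivAt_mobius α β γ θ).deriv, ← (hasDerivAt_mobius α' β' γ' θ).deriv,
    ← deriv_eq_of_eqOn_Icc haθ ⟨haθ.le, le_rfl⟩ hf (hasDerivAt_mobius α β γ θ).differentiableAt hl,
    deriv_eq_of_eqOn_Icc hθb ⟨le_rfl, hθb.le⟩ hf (hasDerivAt_mobius α' β' γ' θ).differentiableAt hr]

theorem sin_add_sin_sub_sin_add (x y : ℝ) :
    sin x + sin y - sin (x + y) = 4 * sin (x / 2) * sin (y / 2) * sin ((x + y) / 2) := by
  obtain ⟨u, rfl⟩ : ∃ u, x = 2 * u := ⟨x / 2, by ring⟩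
  obtain ⟨v, rfl⟩ : ∃ v, y = 2 * v := ⟨y / 2, by ring⟩
  rw [show (2 * u + 2 * v) / 2 = u + v by ring, mul_div_cancel_left₀ _ two_ne_zero,
    mul_div_cancel_left₀ _ two_ne_zero, ← mul_add, sin_two_mul, sin_two_mul, sin_two_mul,
    cos_add, sin_add]
  linear_combination (-2 * sin u * cos u) * sin_sq_add_cos_sq v +
    (-2 * sin v * cos v) * sin_sq_add_cos_sq u

theorem sin_sub_add_sin_sub_sub_sin_sub_pos {θ₁ θ₂ θ₃ : ℝ} (h₁₂ : θ₁ < θ₂) (h₂₃ : θ₂ < θ₃)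
    (h₃ : θ₃ < θ₁ + 2 * π) : 0 < sin (θ₂ - θ₁) + sin (θ₃ - θ₂) - sin (θ₃ - θ₁) := by
  have h := sin_add_sin_sub_sin_add (θ₂ - θ₁) (θ₃ - θ₂)
  rw [show θ₂ - θ₁ + (θ₃ - θ₂) = θ₃ - θ₁ by ring] at h
  rw [h]
  have hsin_pos : ∀ t, 0 < t → t < 2 * π → 0 < sin (t / 2) := fun t h0 h2π =>
    sin_pos_of_pos_of_lt_pi (by linarith) (by linarith)
  have := hsin_pos _ (sub_pos.2 h₁₂) (by linarith)
  have := hsin_pos _ (sub_pos.2 h₂₃) (by linarith)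
  have := hsin_pos (θ₃ - θ₁) (by linarith) (by linarith)
  positivity

theorem eq_zero_of_comb_one_cos_sin_eq_zero {θ₁ θ₂ θ₃ a b c : ℝ} (h₁₂ : θ₁ < θ₂)
    (h₂₃ : θ₂ < θ₃) (h₃ : θ₃ < θ₁ + 2 * π) (hone : a + b + c = 0)
    (hcos : a * cos θ₁ + b * cos θ₂ + c * cos θ₃ = 0)
    (hsin : a * sin θ₁ + b * sin θ₂ + c * sin θ₃ = 0) :
    a = 0 ∧ b = 0 ∧ c = 0 := by
  have hdet := (sin_sub_add_sin_sub_sub_sin_sub_pos h₁₂ h₂₃ h₃).ne'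
  rw [sin_sub, sin_sub, sin_sub] at hdet
  have ha : a * (sin θ₂ * cos θ₁ - cos θ₂ * sin θ₁ + (sin θ₃ * cos θ₂ - cos θ₃ * sin θ₂)
      - (sin θ₃ * cos θ₁ - cos θ₃ * sin θ₁)) = 0 := by
    linear_combination (cos θ₂ * sin θ₃ - cos θ₃ * sin θ₂) * hone
      + (sin θ₂ - sin θ₃) * hcos + (cos θ₃ - cos θ₂) * hsin
  have hb : b * (sin θ₂ * cos θ₁ - cos θ₂ * sin θ₁ + (sin θ₃ * cos θ₂ - cos θ₃ * sin θ₂)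
      - (sin θ₃ * cos θ₁ - cos θ₃ * sin θ₁)) = 0 := by
    linear_combination (cos θ₃ * sin θ₁ - cos θ₁ * sin θ₃) * hone
      + (sin θ₃ - sin θ₁) * hcos + (cos θ₁ - cos θ₃) * hsin
  have ha0 := (mul_eq_zero.1 ha).resolve_right hdet
  have hb0 := (mul_eq_zero.1 hb).resolve_right hdet
  exact ⟨ha0, hb0, by linarith⟩

theorem Function.Periodic.eq_of_eqOn_Ico {α β : Type*} [AddCommGroup α] [LinearOrder α]
    [IsOrderedAddMonoid α] [Archimedean α] [AddGroup β] {f g : α → β} {c a : α}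
    (hf : Function.Periodic f c) (hg : Function.Periodic g c) (hc : 0 < c)
    (h : EqOn f g (Ico a (a + c))) : f = g := by
  funext x
  obtain ⟨y, hy, hxy⟩ := (hf.sub hg).exists_mem_Ico hc x a
  rw [← sub_eq_zero]
  simpa [sub_eq_zero.2 (h hy)] using hxy

/-- A once differentiable 2π-periodic function which is piecewise Möbius with
(at most) three pieces is a Möbius vector field; in particular the three
defining triples of coefficients coincide. -/
theorem piecewise_mobius_three_pieces_is_mobius
    (θ₁ θ₂ θ₃ : ℝ) (h₁₂ : θ₁ < θ₂) (h₂₃ : θ₂ < θ₃) (h₃ : θ₃ < θ₁ + 2 * Real.pi)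
    (f : ℝ → ℝ) (hper : Function.Periodic f (2 * Real.pi))
    (hdiff : ∀ x : ℝ, DifferentiableAt ℝ f x)
    (α₁ β₁ γ₁ α₂ β₂ γ₂ α₃ β₃ γ₃ : ℝ)
    (h1 : ∀ x ∈ Set.Icc θ₁ θ₂, f x = α₁ + β₁ * Real.cos x + γ₁ * Real.sin x)
    (h2 : ∀ x ∈ Set.Icc θ₂ θ₃, f x = α₂ + β₂ * Real.cos x + γ₂ * Real.sin x)
    (h3 : ∀ x ∈ Set.Icc θ₃ (θ₁ + 2 * Real.pi),
      f x = α₃ + β₃ * Real.cos x + γ₃ * Real.sin x) :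
    (∀ x : ℝ, f x = α₁ + β₁ * Real.cos x + γ₁ * Real.sin x) ∧
      (α₂, β₂, γ₂) = (α₁, β₁, γ₁) ∧ (α₃, β₃, γ₃) = (α₁, β₁, γ₁) := by
  have h1' : EqOn f (mobius α₁ β₁ γ₁) (Icc (θ₁ + 2 * π) (θ₂ + 2 * π)) := fun y hy => by
    rw [← hper.sub_eq y, ← (mobius_periodic α₁ β₁ γ₁).sub_eq y]
    exact h1 _ ⟨by linarith [hy.1], by linarith [hy.2]⟩
  obtain ⟨hβ₁₂, hγ₁₂⟩ := mobius_coeff_sub_of_junction h₁₂ h₂₃ (hdiff θ₂) (fun x hx => h1 x hx)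
    (fun x hx => h2 x hx)
  obtain ⟨hβ₂₃, hγ₂₃⟩ := mobius_coeff_sub_of_junction h₂₃ h₃ (hdiff θ₃) (fun x hx => h2 x hx)
    (fun x hx => h3 x hx)
  obtain ⟨hβ₃₁, hγ₃₁⟩ := mobius_coeff_sub_of_junction h₃ (by linarith) (hdiff _)
    (fun x hx => h3 x hx) h1'
  rw [cos_add_two_pi] at hβ₃₁
  rw [sin_add_two_pi] at hγ₃₁
  obtain ⟨hα₃₁, hα₁₂, -⟩ := eq_zero_of_comb_one_cos_sin_eq_zero h₁₂ h₂₃ h₃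
    (a := α₃ - α₁) (b := α₁ - α₂) (c := α₂ - α₃) (by ring)
    (by linear_combination hβ₁₂ + hβ₂₃ + hβ₃₁) (by linear_combination hγ₁₂ + hγ₂₃ + hγ₃₁)
  obtain ⟨rfl, rfl⟩ : α₁ = α₂ ∧ α₁ = α₃ := ⟨by linarith, by linarith⟩
  obtain ⟨rfl, rfl, rfl, rfl⟩ : β₁ = β₂ ∧ γ₁ = γ₂ ∧ β₁ = β₃ ∧ γ₁ = γ₃ := by
    simp only [sub_self, neg_zero, zero_mul, sub_eq_zero] at hβ₁₂ hγ₁₂ hβ₃₁ hγ₃₁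
    exact ⟨hβ₁₂, hγ₁₂, hβ₃₁.symm, hγ₃₁.symm⟩
  refine ⟨congrFun (hper.eq_of_eqOn_Ico (a := θ₁) (mobius_periodic α₁ β₁ γ₁) two_pi_pos ?_),
    rfl, rfl⟩
  rintro x ⟨hx₁, hx₂⟩
  rcases le_total x θ₂ with hx | hx
  · exact h1 x ⟨hx₁, hx⟩
  rcases le_total x θ₃ with hx' | hx'
  · exact h2 x ⟨hx, hx'⟩
  · exact h3 x ⟨hx', hx₂.le⟩
end
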